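/- arXiv:1610.07100 — 9 statements merged into one kernel-verified Lean document; each statement's English description precedes it below -/
import Mathlib

section
/- Let N ≥ 2 be even. Consider the Ising instance on N variables with h i = 0 for all i and J i j = 1 for all i ≠ j, so H(S) = ∑_{i<j} S i * S j. Then an assignment S is a local minimum of this instance if and only if ∑_i S i = 0; moreover every local minimum is a global minimum, and consequently the number of local minima is exactly the binomial coefficient (N choose N/2). -/
open Finset

/-- An assignment gives each variable the value `-1` or `1`. -/
def IsAssignment {N : ℕ} (S : Fin N → ℝ) : Prop := ∀ i, S i = -1 ∨ S i = 1

/-- Energy of an Ising instance: `H(S) = ∑ i, h i * S i + ∑_{i<j} J i j * S i * S j`. -/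
noncomputable def energy {N : ℕ} (h : Fin N → ℝ) (J : Fin N → Fin N → ℝ)
    (S : Fin N → ℝ) : ℝ :=
  ∑ i, h i * S i + ∑ i, ∑ j, if i < j then J i j * S i * S j else 0

/-- The assignment obtained from `S` by flipping the spin at `i`. -/
noncomputable def flipAt {N : ℕ} (S : Fin N → ℝ) (i : Fin N) : Fin N → ℝ :=
  Function.update S i (-(S i))

/-- A local minimum: flipping any single variable strictly increases the energy. -/
def IsingLocalMin {N : ℕ} (h : Fin N → ℝ) (J : Fin N → Fin N → ℝ) (S : Fin N → ℝ) : Prop :=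
  IsAssignment S ∧ ∀ i, energy h J S < energy h J (flipAt S i)

/-- A global minimum: minimal energy among all assignments. -/
def IsingGlobalMin {N : ℕ} (h : Fin N → ℝ) (J : Fin N → Fin N → ℝ) (S : Fin N → ℝ) : Prop :=
  IsAssignment S ∧ ∀ S', IsAssignment S' → energy h J S ≤ energy h J S'

/-- Degree of variable `i` in the graph of the instance: the number of `j ≠ i` with `J i j ≠ 0`. -/
noncomputable def degreeJ {N : ℕ} (J : Fin N → Fin N → ℝ) (i : Fin N) : ℕ :=
  Set.ncard {j | j ≠ i ∧ J i j ≠ 0}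

/-!
With `h = 0` and unit couplings, `2 H(S) = (∑ S)² - ∑ S² = (∑ S)² - N`, so flipping spin `i`
changes the energy by `2 - 2 S i ∑ S`. The sum `∑ S` is an integer, and when it is nonzero some
spin has its sign (as `∑ i, S i ∑ S = (∑ S)² > 0`); that flip does not increase the energy.
Hence the local minima are exactly the assignments with `∑ S = 0`, which minimise `(∑ S)²`
globally and correspond to the `N / 2`-element sets of spins equal to `1`.
-/

theorem Finset.sq_sum_eq_sum_sq_add_two_mul_sum_lt {ι R : Type*} [Fintype ι] [LinearOrder ι]
    [CommRing R] (x : ι → R) :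
    (∑ i, x i) ^ 2 = ∑ i, x i ^ 2 + 2 * ∑ i, ∑ j, if i < j then x i * x j else 0 := by
  have hsplit : ∀ i j, x i * x j = (if i < j then x i * x j else 0) +
      (if j < i then x j * x i else 0) + (if i = j then x i ^ 2 else 0) := by
    intro i j
    rcases lt_trichotomy i j with hij | rfl | hij
    · simp [hij, hij.ne, hij.not_gt]
    · simp [sq]
    · simp [hij, hij.ne', hij.not_gt, mul_comm]
  rw [sq, sum_mul_sum, sum_congr rfl fun i _ => sum_congr rfl fun j _ => hsplit i j]
  simp only [sum_add_distrib, sum_ite_eq, mem_univ, if_true]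
  rw [sum_comm (f := fun i j => if j < i then x j * x i else 0)]
  ring

section CompleteGraph

variable {N : ℕ} {h : Fin N → ℝ} {J : Fin N → Fin N → ℝ}

theorem two_mul_energy_of_complete (hh : ∀ i, h i = 0) (hJ : ∀ i j, i ≠ j → J i j = 1)
    (S : Fin N → ℝ) : 2 * energy h J S = (∑ i, S i) ^ 2 - ∑ i, S i ^ 2 := by
  have hoff : ∀ i j, (if i < j then J i j * S i * S j else 0) =
      if i < j then S i * S j else 0 := by
    intro i j
    split_ifs with hij
    · rw [hJ i j hij.ne, one_mul]
    · rfl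
  simp only [energy, hh, zero_mul, sum_const_zero, zero_add, hoff,
    sq_sum_eq_sum_sq_add_two_mul_sum_lt]
  ring

theorem sum_flipAt (S : Fin N → ℝ) (i : Fin N) :
    ∑ j, flipAt S i j = ∑ j, S j - 2 * S i := by
  rw [flipAt, sum_update_of_mem (mem_univ i), sdiff_singleton_eq_erase,
    ← add_sum_erase _ _ (mem_univ i)]
  ring

theorem sum_sq_flipAt (S : Fin N → ℝ) (i : Fin N) :
    ∑ j, flipAt S i j ^ 2 = ∑ j, S j ^ 2 := by
  refine sum_congr rfl fun j _ => ?_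
  rcases eq_or_ne j i with rfl | hji
  · simp [flipAt]
  · simp [flipAt, hji]

theorem energy_flipAt_sub_of_complete (hh : ∀ i, h i = 0) (hJ : ∀ i j, i ≠ j → J i j = 1)
    (S : Fin N → ℝ) (i : Fin N) :
    energy h J (flipAt S i) - energy h J S = 2 * S i * (S i - ∑ j, S j) := by
  have h1 := two_mul_energy_of_complete hh hJ (flipAt S i)
  have h2 := two_mul_energy_of_complete hh hJ S
  rw [sum_flipAt, sum_sq_flipAt] at h1
  linarith

theorem IsAssignment.sq_eq_one {S : Fin N → ℝ} (hS : IsAssignment S) (i : Fin N) :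
    S i ^ 2 = 1 := by
  rcases hS i with h | h <;> simp [h]

theorem IsAssignment.sum_sq {S : Fin N → ℝ} (hS : IsAssignment S) : ∑ i, S i ^ 2 = N := by
  simp [hS.sq_eq_one]

def spinsOf (A : Finset (Fin N)) : Fin N → ℝ := fun i => if i ∈ A then 1 else -1

theorem isAssignment_spinsOf (A : Finset (Fin N)) : IsAssignment (spinsOf A) := by
  intro i
  by_cases hi : i ∈ A <;> simp [spinsOf, hi]

theorem spinsOf_eq_one_iff {A : Finset (Fin N)} {i : Fin N} : spinsOf A i = 1 ↔ i ∈ A := by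
  by_cases hi : i ∈ A <;> norm_num [spinsOf, hi]

theorem spinsOf_injective : Function.Injective (spinsOf (N := N)) := by
  intro A B hAB
  ext i
  rw [← spinsOf_eq_one_iff, hAB, spinsOf_eq_one_iff]

theorem IsAssignment.exists_spinsOf_eq {S : Fin N → ℝ} (hS : IsAssignment S) :
    ∃ A, spinsOf A = S := by
  refine ⟨univ.filter (S · = 1), funext fun i => ?_⟩
  rcases hS i with h | h <;> norm_num [spinsOf, h]

theorem sum_spinsOf (A : Finset (Fin N)) : ∑ i, spinsOf A i = 2 * #A - N := by
  have h : ∀ i, spinsOf A i = 2 * (if i ∈ A then 1 else 0) - 1 := by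
    intro i
    by_cases hi : i ∈ A <;> norm_num [spinsOf, hi]
  simp [h, sum_sub_distrib]
  ring

theorem IsAssignment.exists_one_le_mul_sum {S : Fin N → ℝ} (hS : IsAssignment S)
    (hs : ∑ i, S i ≠ 0) : ∃ i, 1 ≤ S i * ∑ j, S j := by
  obtain ⟨A, rfl⟩ := hS.exists_spinsOf_eq
  have hpos : ∑ _i : Fin N, (0 : ℝ) < ∑ i, spinsOf A i * ∑ j, spinsOf A j := by
    rw [← sum_mul, sum_const_zero]
    exact mul_self_pos.2 hs
  obtain ⟨i, -, hi⟩ := exists_lt_of_sum_lt hpos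
  obtain ⟨k, hk⟩ : ∃ k : ℤ, spinsOf A i * ∑ j, spinsOf A j = k := by
    rw [sum_spinsOf]
    rcases hS i with h | h
    · exact ⟨N - 2 * #A, by rw [h]; push_cast; ring⟩
    · exact ⟨2 * #A - N, by rw [h]; push_cast; ring⟩
  refine ⟨i, ?_⟩
  rw [hk] at hi ⊢
  exact_mod_cast Int.cast_pos.1 hi

theorem isingLocalMin_iff_of_complete (hh : ∀ i, h i = 0) (hJ : ∀ i j, i ≠ j → J i j = 1)
    {S : Fin N → ℝ} (hS : IsAssignment S) : IsingLocalMin h J S ↔ ∑ i, S i = 0 := by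
  have hflip : ∀ i, energy h J S < energy h J (flipAt S i) ↔ S i * ∑ j, S j < 1 := by
    intro i
    have := hS.sq_eq_one i
    rw [← sub_pos, energy_flipAt_sub_of_complete hh hJ]
    constructor <;> intro <;> nlinarith
  rw [IsingLocalMin, and_iff_right hS, forall_congr' hflip]
  constructor
  · intro hlt
    by_contra hs
    obtain ⟨i, hi⟩ := hS.exists_one_le_mul_sum hs
    linarith [hlt i]
  · intro hs i
    simp [hs]

theorem IsingLocalMin.isingGlobalMin_of_complete (hh : ∀ i, h i = 0)
    (hJ : ∀ i j, i ≠ j → J i j = 1) {S : Fin N → ℝ} (hS : IsingLocalMin h J S) :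
    IsingGlobalMin h J S := by
  refine ⟨hS.1, fun S' hS' => ?_⟩
  have hE := two_mul_energy_of_complete hh hJ S
  have hE' := two_mul_energy_of_complete hh hJ S'
  rw [(isingLocalMin_iff_of_complete hh hJ hS.1).1 hS, hS.1.sum_sq] at hE
  rw [hS'.sum_sq] at hE'
  nlinarith [sq_nonneg (∑ i, S' i)]

theorem setOf_isingLocalMin_of_complete (hh : ∀ i, h i = 0) (hJ : ∀ i j, i ≠ j → J i j = 1)
    (hN : Even N) :
    {S | IsingLocalMin h J S} = spinsOf '' ↑(powersetCard (N / 2) (univ : Finset (Fin N))) := by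
  ext S
  simp only [Set.mem_ofPred_eq, Set.mem_image, mem_coe, mem_powersetCard, subset_univ, true_and]
  constructor
  · intro hS
    obtain ⟨A, rfl⟩ := hS.1.exists_spinsOf_eq
    refine ⟨A, ?_, rfl⟩
    have hsum := (isingLocalMin_iff_of_complete hh hJ hS.1).1 hS
    rw [sum_spinsOf, sub_eq_zero] at hsum
    have : 2 * #A = N := by exact_mod_cast hsum
    omega
  · rintro ⟨A, hA, rfl⟩
    rw [isingLocalMin_iff_of_complete hh hJ (isAssignment_spinsOf A), sum_spinsOf, hA,
      sub_eq_zero]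
    exact_mod_cast Nat.two_mul_div_two_of_even hN

end CompleteGraph

theorem stmt0_general (N : ℕ) (hNeven : Even N)
    (h : Fin N → ℝ) (J : Fin N → Fin N → ℝ)
    (hh : ∀ i, h i = 0)
    (hJ : ∀ i j, i ≠ j → J i j = 1) :
    (∀ S : Fin N → ℝ, IsAssignment S →
      (IsingLocalMin h J S ↔ ∑ i, S i = 0)) ∧
    (∀ S, IsingLocalMin h J S → IsingGlobalMin h J S) ∧
    Set.ncard {S : Fin N → ℝ | IsingLocalMin h J S} = N.choose (N / 2) := by
  refine ⟨fun S hS => isingLocalMin_iff_of_complete hh hJ hS,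
    fun S hS => hS.isingGlobalMin_of_complete hh hJ, ?_⟩
  rw [setOf_isingLocalMin_of_complete hh hJ hNeven,
    Set.ncard_image_of_injective _ spinsOf_injective, Set.ncard_coe_finset, card_powersetCard,
    card_univ, Fintype.card_fin]

/-- for the instance with `h = 0` and `J i j = 1` for `i ≠ j` (`N ≥ 2` even),
an assignment is a local minimum iff its spins sum to zero, every local minimum is a global
minimum, and the number of local minima is exactly `N.choose (N / 2)`. -/
theorem stmt0 (N : ℕ) (hN2 : 2 ≤ N) (hNeven : Even N)
    (h : Fin N → ℝ) (J : Fin N → Fin N → ℝ)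
    (hh : ∀ i, h i = 0)
    (hJ : ∀ i j, i ≠ j → J i j = 1)
    (hJdiag : ∀ i, J i i = 0) :
    (∀ S : Fin N → ℝ, IsAssignment S →
      (IsingLocalMin h J S ↔ ∑ i, S i = 0)) ∧
    (∀ S, IsingLocalMin h J S → IsingGlobalMin h J S) ∧
    Set.ncard {S : Fin N → ℝ | IsingLocalMin h J S} = N.choose (N / 2) :=
  stmt0_general N hNeven h J hh hJ
end

section
/- Let an Ising instance on N variables have a graph of maximum degree at most d (d ≥ 0 an integer). Then the number of local minima of the instance is at most 2^{N·(1 − 1/(d+1))}. -/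
open Finset

/-!
In a local minimum every spin `S i` has the sign opposite to its local field
`h i + ∑ j, J i j * S j`, so it is determined by the spins of the neighbours of `i`. A maximum
independent set `I` of the interaction graph dominates it, whence `N ≤ (d + 1) * #I`. The spins on
`I` of a local minimum are thus determined by those on `Iᶜ`, leaving at most
`2 ^ (N - #I) ≤ 2 ^ (N * (1 - 1 / (d + 1)))` local minima.
-/

open Matrix

lemma sum_sum_ite_lt_eq_half {ι : Type*} [Fintype ι] [LinearOrder ι] (a : ι → ι → ℝ)
    (hsym : ∀ i j, a i j = a j i) (hdiag : ∀ i, a i i = 0) :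
    ∑ i, ∑ j, (if i < j then a i j else 0) = (∑ i, ∑ j, a i j) / 2 := by
  have hsplit : ∀ i j, a i j = (if i < j then a i j else 0) + (if j < i then a j i else 0) := by
    intro i j
    rcases lt_trichotomy i j with hij | rfl | hji
    · simp [hij, hij.not_gt]
    · simp [hdiag]
    · simp [hji, hji.not_gt, hsym i j]
  have hdouble : ∑ i, ∑ j, a i j = 2 * ∑ i, ∑ j, (if i < j then a i j else 0) := by
    conv_lhs => enter [2, i, 2, j]; rw [hsplit i j]
    simp only [Finset.sum_add_distrib]
    rw [Finset.sum_comm (f := fun i j => if j < i then a j i else 0)]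
    ring
  linarith

lemma pow_sub_le_rpow_mul_one_sub_inv {b : ℝ} (hb : 1 ≤ b) {N d k : ℕ} (hkN : k ≤ N)
    (hk : N ≤ (d + 1) * k) : b ^ (N - k) ≤ b ^ ((N : ℝ) * (1 - 1 / ((d : ℝ) + 1))) := by
  rw [← Real.rpow_natCast, Nat.cast_sub hkN]
  apply Real.rpow_le_rpow_of_exponent_le hb
  have hd : (0 : ℝ) < d + 1 := by positivity
  have hNk : (N : ℝ) / (d + 1) ≤ k := by
    rw [div_le_iff₀ hd, mul_comm]
    exact_mod_cast hk
  calc (N : ℝ) - k ≤ N - N / (d + 1) := by linarith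
    _ = N * (1 - 1 / (d + 1)) := by ring

theorem SimpleGraph.exists_isIndepSet_card_le_mul {V : Type*} [Fintype V] [DecidableEq V]
    (G : SimpleGraph V) [DecidableRel G.Adj] {d : ℕ} (hd : ∀ v, G.degree v ≤ d) :
    ∃ s : Finset V, G.IsIndepSet s ∧ Fintype.card V ≤ (d + 1) * #s := by
  obtain ⟨s, hs_indep, hs_max⟩ := G.maximumIndepSet_exists
  have hcover : (univ : Finset V) ⊆ s ∪ s.biUnion fun v => G.neighborFinset v := by
    intro v _
    by_contra hv
    simp only [mem_union, mem_biUnion, mem_neighborFinset, not_or, not_exists, not_and] at hv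
    have hindep : G.IsIndepSet (insert v s : Finset V) := by
      rw [coe_insert]
      exact hs_indep.insert fun u hu _ => ⟨fun hvu => hv.2 u hu hvu.symm, hv.2 u hu⟩
    have := hs_max _ hindep
    rw [card_insert_of_notMem hv.1] at this
    omega
  refine ⟨s, hs_indep, ?_⟩
  calc Fintype.card V = #(univ : Finset V) := card_univ.symm
    _ ≤ #s + #(s.biUnion fun v => G.neighborFinset v) :=
        (card_le_card hcover).trans (card_union_le _ _)
    _ ≤ #s + #s * d := by
        gcongr
        exact card_biUnion_le_card_mul _ _ _ fun v _ => hd v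
    _ = (d + 1) * #s := by ring

lemma ncard_le_two_pow_of_injOn_restrict {N : ℕ} {A : Set (Fin N → ℝ)} (M : Finset (Fin N))
    (hA : ∀ S ∈ A, IsAssignment S)
    (hinj : ∀ S ∈ A, ∀ S' ∈ A, (∀ j ∈ M, S j = S' j) → S = S') :
    A.ncard ≤ 2 ^ #M := by
  let F : (Fin N → ℝ) → (M → Bool) := fun S j => decide (S j = 1)
  have hF : Set.InjOn F A := by
    intro S hS S' hS' hFS
    refine hinj S hS S' hS' fun j hj => ?_
    have hj := congrFun hFS ⟨j, hj⟩
    simp only [F, decide_eq_decide] at hj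
    rcases hA S hS j with h₁ | h₁ <;> rcases hA S' hS' j with h₂ | h₂ <;> simp_all
  calc A.ncard ≤ (Set.univ : Set (M → Bool)).ncard :=
        Set.ncard_le_ncard_of_injOn F (fun _ _ => Set.mem_univ _) hF Set.finite_univ
    _ = 2 ^ #M := by simp [Set.ncard_univ]

section Energy

variable {N : ℕ} (h : Fin N → ℝ) (J : Fin N → Fin N → ℝ)

def localField (S : Fin N → ℝ) (i : Fin N) : ℝ := h i + (of J *ᵥ S) i

variable {J}

lemma energy_eq_dotProduct (hsym : ∀ i j, J i j = J j i) (hdiag : ∀ i, J i i = 0)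
    (S : Fin N → ℝ) : energy h J S = h ⬝ᵥ S + S ⬝ᵥ (of J *ᵥ S) / 2 := by
  rw [energy, sum_sum_ite_lt_eq_half _ (fun i j => by rw [hsym]; ring)
    (fun i => by rw [hdiag]; ring)]
  simp only [dotProduct, mulVec, of_apply, Finset.mul_sum]
  congr 2
  refine Finset.sum_congr rfl fun i _ => Finset.sum_congr rfl fun j _ => by ring

lemma flipAt_eq_add_single (S : Fin N → ℝ) (i : Fin N) :
    flipAt S i = S + Pi.single i (-2 * S i) := by
  funext k
  rcases eq_or_ne k i with rfl | hk
  · simp only [flipAt, Function.update_self, Pi.add_apply, Pi.single_eq_same]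
    ring
  · simp [flipAt, hk]

lemma energy_flipAt (hsym : ∀ i j, J i j = J j i) (hdiag : ∀ i, J i i = 0)
    (S : Fin N → ℝ) (i : Fin N) :
    energy h J (flipAt S i) = energy h J S - 2 * S i * localField h J S i := by
  rw [energy_eq_dotProduct h hsym hdiag, energy_eq_dotProduct h hsym hdiag, flipAt_eq_add_single]
  set δ : Fin N → ℝ := Pi.single i (-2 * S i)
  have hJt : (of J)ᵀ = of J := Matrix.ext fun i j => hsym j i
  have hSδ : S ⬝ᵥ (of J *ᵥ δ) = -2 * S i * (of J *ᵥ S) i := by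
    rw [dotProduct_mulVec, ← mulVec_transpose, hJt, dotProduct_single, mul_comm]
  have hδS : δ ⬝ᵥ (of J *ᵥ S) = -2 * S i * (of J *ᵥ S) i := single_dotProduct ..
  have hδδ : δ ⬝ᵥ (of J *ᵥ δ) = 0 := by simp [δ, hdiag]
  simp only [mulVec_add, dotProduct_add, add_dotProduct, hSδ, hδS, hδδ]
  rw [dotProduct_single, localField]
  ring

end Energy

lemma localField_congr {N : ℕ} {h : Fin N → ℝ} {J : Fin N → Fin N → ℝ} {S S' : Fin N → ℝ}
    {i : Fin N} (hSS' : ∀ j, J i j ≠ 0 → S j = S' j) :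
    localField h J S i = localField h J S' i := by
  simp only [localField, mulVec, dotProduct, of_apply]
  congr 1
  refine Finset.sum_congr rfl fun j _ => ?_
  by_cases hj : J i j = 0
  · simp [hj]
  · rw [hSS' j hj]

namespace IsingLocalMin

variable {N : ℕ} {h : Fin N → ℝ} {J : Fin N → Fin N → ℝ} {S S' : Fin N → ℝ}

lemma mul_localField_neg (hsym : ∀ i j, J i j = J j i) (hdiag : ∀ i, J i i = 0)
    (hS : IsingLocalMin h J S) (i : Fin N) : S i * localField h J S i < 0 := by
  have := hS.2 i
  rw [energy_flipAt h hsym hdiag] at this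
  linarith

lemma apply_eq_of_localField_eq (hsym : ∀ i j, J i j = J j i) (hdiag : ∀ i, J i i = 0)
    (hS : IsingLocalMin h J S) (hS' : IsingLocalMin h J S') {i : Fin N}
    (hfield : localField h J S i = localField h J S' i) : S i = S' i := by
  have h₁ := hS.mul_localField_neg hsym hdiag i
  have h₂ := hS'.mul_localField_neg hsym hdiag i
  rw [← hfield] at h₂
  rcases hS.1 i with hi | hi <;> rcases hS'.1 i with hi' | hi' <;> rw [hi, hi'] <;>
    rw [hi] at h₁ <;> rw [hi'] at h₂ <;> linarith

lemma eq_of_eqOn_compl (hsym : ∀ i j, J i j = J j i) (hdiag : ∀ i, J i i = 0)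
    {I : Finset (Fin N)} (hI : ∀ i ∈ I, ∀ j ∈ I, J i j = 0)
    (hS : IsingLocalMin h J S) (hS' : IsingLocalMin h J S') (hSS' : ∀ j ∉ I, S j = S' j) :
    S = S' := by
  funext i
  by_cases hi : i ∈ I
  · exact hS.apply_eq_of_localField_eq hsym hdiag hS'
      (localField_congr fun j hj => hSS' j fun hjI => hj (hI i hi j hjI))
  · exact hSS' i hi

end IsingLocalMin

def isingGraph {N : ℕ} (J : Fin N → Fin N → ℝ) : SimpleGraph (Fin N) :=
  SimpleGraph.fromRel fun i j => J i j ≠ 0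

lemma isingGraph_degree {N : ℕ} {J : Fin N → Fin N → ℝ} (hsym : ∀ i j, J i j = J j i)
    [DecidableRel (isingGraph J).Adj] (i : Fin N) : (isingGraph J).degree i = degreeJ J i := by
  rw [degreeJ, ← SimpleGraph.card_neighborSet_eq_degree, ← Nat.card_eq_fintype_card,
    Nat.card_coe_set_eq]
  congr 1
  ext j
  simp [isingGraph, hsym j i, ne_comm]

/-- an Ising instance whose graph has maximum degree at most `d` has at most
`2 ^ (N * (1 - 1/(d+1)))` local minima. -/
theorem stmt2 (N d : ℕ) (h : Fin N → ℝ) (J : Fin N → Fin N → ℝ)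
    (hsym : ∀ i j, J i j = J j i) (hdiag : ∀ i, J i i = 0)
    (hdeg : ∀ i, degreeJ J i ≤ d) :
    (Set.ncard {S : Fin N → ℝ | IsingLocalMin h J S} : ℝ) ≤
      (2 : ℝ) ^ ((N : ℝ) * (1 - 1 / ((d : ℝ) + 1))) := by
  classical
  obtain ⟨I, hI_indep, hI_card⟩ := (isingGraph J).exists_isIndepSet_card_le_mul
    fun i => (isingGraph_degree hsym i).trans_le (hdeg i)
  have hI : ∀ i ∈ I, ∀ j ∈ I, J i j = 0 := by
    intro i hi j hj
    rcases eq_or_ne i j with rfl | hij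
    · exact hdiag i
    · by_contra hJ
      exact hI_indep hi hj hij (by simp [isingGraph, hij, hJ])
  have hcount := ncard_le_two_pow_of_injOn_restrict (A := {S | IsingLocalMin h J S}) Iᶜ
    (fun S hS => hS.1) fun S hS S' hS' hSS' =>
      hS.eq_of_eqOn_compl hsym hdiag hI hS' fun j hj => hSS' j (mem_compl.2 hj)
  rw [card_compl, Fintype.card_fin] at hcount
  rw [Fintype.card_fin] at hI_card
  calc _ ≤ ((2 ^ (N - #I) : ℕ) : ℝ) := by exact_mod_cast hcount
    _ ≤ _ := by
      push_cast
      exact pow_sub_le_rpow_mul_one_sub_inv one_le_two (by simpa using card_le_univ I) hI_card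
end

section
/- There exists a constant c > 0 such that for every integer f ≥ 1 and every even integer l ≥ 2, there is a choice of integers M_C, one for each column C, such that the number of zero-energy assignments (assignments S : {1,…,l}^f → {−1,+1} with ∑_{i ∈ C} S i = M_C for every column C) is at least 2^N · (c/(f·√l))^{n_C}, where N = l^f and n_C = f·l^{f−1}. -/
/-
Count pairs `(S, S')` of `±1` assignments with equal column sums: by pigeonhole, some fibre of
the column-sum map contains at least a `2⁻ᴺ` fraction of them. Column-sum differences lie in
`[-2l, 2l]`, so equality can be detected with the additive characters modulo `m = 2l + 1`; this
turns the pair count into `m^(-n_C) ∑_J (∏_p 2 cos (2π τ_J(p) / m))²`, where `J` runs over integer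
column weights in `[-l, l]` and `τ_J(p)` is the total weight of the `f` columns through `p`. All
terms are nonnegative, and for the `(2K+1)^n_C` weight vectors with `|J| ≤ K ≈ m / (2π f √l)`
every angle is at most `1/√l`, so each such term is at least `(4 e^(-2/l))^N` because
`cos² x ≥ e^(-2x²)` for `x² ≤ 1/2`.
-/

open Finset

/-- The sum of `S` along the column through `y` in direction `b`
(the column consists of the points `Function.update y b x` for `x : Fin l`;
this sum does not depend on the value `y b`). -/
def colSum (f l : ℕ) (S : (Fin f → Fin l) → ℤ) (b : Fin f) (y : Fin f → Fin l) : ℤ :=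
  ∑ x : Fin l, S (Function.update y b x)

open Real

namespace IsPrimitiveRoot

variable {K : Type*} [Field K] {ζ : K} {m : ℕ}

theorem sum_Ico_zpow_mul_eq_ite (hζ : IsPrimitiveRoot ζ m) (a d : ℤ) (hd : |d| < m) :
    ∑ j ∈ Ico a (a + m), ζ ^ (j * d) = if d = 0 then (m : K) else 0 := by
  have hζ0 : ζ ≠ 0 := hζ.ne_zero (by have := abs_nonneg d; omega)
  rw [Int.Ico_eq_finset_map, sum_map, add_sub_cancel_left, Int.toNat_natCast]
  simp only [Function.Embedding.trans_apply, Nat.castEmbedding_apply, addLeftEmbedding_apply,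
    mul_comm _ d, zpow_mul, zpow_add₀ (zpow_ne_zero d hζ0), zpow_natCast, ← mul_sum]
  split_ifs with hd0
  · simp [hd0]
  · have hne : ζ ^ d ≠ 1 := fun h =>
      hd0 (Int.eq_zero_of_abs_lt_dvd ((hζ.zpow_eq_one_iff_dvd d).mp h) hd)
    have hpow : (ζ ^ d) ^ m = 1 := by
      rw [← zpow_natCast, ← zpow_mul, mul_comm, zpow_mul, hζ.zpow_eq_one, one_zpow]
    rw [geom_sum_eq hne, hpow, sub_self, zero_div, mul_zero]

end IsPrimitiveRoot

theorem Finset.exists_card_collisions_le {α β : Type*} [DecidableEq β] {s : Finset α}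
    (hs : s.Nonempty) (g : α → β) :
    ∃ y ∈ s, #{p ∈ s ×ˢ s | g p.1 = g p.2} ≤ #s * #{x ∈ s | g x = g y} := by
  obtain ⟨y, hy, hmax⟩ := s.exists_max_image (fun y => #{x ∈ s | g x = g y}) hs
  refine ⟨y, hy, ?_⟩
  rw [card_filter, sum_product_right]
  simp_rw [← card_filter]
  exact sum_le_card_nsmul _ _ _ hmax

theorem Real.exp_neg_two_mul_sq_le_cos_sq {x : ℝ} (hx : x ^ 2 ≤ 1 / 2) :
    exp (-(2 * x ^ 2)) ≤ cos x ^ 2 := by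
  have hpos : 0 < 1 + 2 * x ^ 2 := by positivity
  have hcos : 1 - x ^ 2 / 2 ≤ cos x := one_sub_sq_div_two_le_cos
  calc exp (-(2 * x ^ 2)) ≤ (1 + 2 * x ^ 2)⁻¹ := by
        rw [exp_neg]
        exact inv_anti₀ hpos (by linarith [add_one_le_exp (2 * x ^ 2)])
    _ ≤ 1 - x ^ 2 := by
        rw [inv_le_iff_one_le_mul₀ hpos]
        nlinarith
    _ ≤ cos x ^ 2 := by nlinarith

theorem Real.le_sq_prod_two_cos {ι : Type*} [Fintype ι] {x : ι → ℝ} {ε : ℝ} (hε : ε ≤ 1 / 2)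
    (hx : ∀ i, x i ^ 2 ≤ ε) :
    (4 * exp (-(2 * ε))) ^ Fintype.card ι ≤ (∏ i, 2 * cos (x i)) ^ 2 := by
  rw [← prod_pow, ← card_univ, ← prod_const]
  refine prod_le_prod (fun _ _ => by positivity) fun i _ => ?_
  calc 4 * exp (-(2 * ε)) ≤ 4 * exp (-(2 * x i ^ 2)) := by gcongr; exact hx i
    _ ≤ 4 * cos (x i) ^ 2 := by gcongr; exact exp_neg_two_mul_sq_le_cos_sq ((hx i).trans hε)
    _ = (2 * cos (x i)) ^ 2 := by ring

theorem Real.exp_neg_div_pow (x : ℝ) {n k : ℕ} (hk : 1 ≤ k) (hn : n ≠ 0) :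
    exp (-(x / n)) ^ (n ^ k) = exp (-x) ^ (n ^ (k - 1)) := by
  rw [← exp_nat_mul, ← exp_nat_mul]
  congr 1
  obtain ⟨k, rfl⟩ := Nat.exists_eq_add_of_le' hk
  field_simp
  push_cast [Nat.add_sub_cancel, pow_succ]
  ring

section Fourier

open Matrix

variable {ι κ : Type*} [Fintype ι] [DecidableEq ι] [Fintype κ] [DecidableEq κ]

variable (ι) in
def signVectors : Finset (ι → ℤ) := Fintype.piFinset fun _ => {1, -1}

theorem sum_signVectors_exp_dotProduct (c : ℂ) (v : ι → ℤ) :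
    ∑ S ∈ signVectors ι, Complex.exp ((v ⬝ᵥ S : ℤ) * c) = ∏ i, 2 * Complex.cosh (v i * c) := by
  simp only [dotProduct, Int.cast_sum, Int.cast_mul, sum_mul, Complex.exp_sum]
  rw [signVectors, sum_prod_piFinset {1, -1} fun i (j : ℤ) => Complex.exp (v i * (j : ℂ) * c)]
  refine Fintype.prod_congr _ _ fun i => ?_
  rw [sum_pair (by decide), Complex.two_cosh]
  push_cast
  ring_nf

theorem boole_eq_zero_eq_sum_exp {m : ℕ} (a : ℤ) (d : κ → ℤ) (hd : ∀ k, |d k| < m) :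
    (if d = 0 then 1 else 0 : ℂ) = (m : ℂ)⁻¹ ^ Fintype.card κ *
      ∑ J ∈ Fintype.piFinset fun _ : κ => Ico a (a + m),
        Complex.exp ((J ⬝ᵥ d : ℤ) * (2 * π * Complex.I / m)) := by
  have hcoord : ∀ k, (if d k = 0 then 1 else 0 : ℂ) =
      (m : ℂ)⁻¹ * ∑ j ∈ Ico a (a + m), Complex.exp ((j * d k : ℤ) * (2 * π * Complex.I / m)) := by
    intro k
    have hm : m ≠ 0 := by have := abs_nonneg (d k); have := hd k; omega
    simp only [Complex.exp_int_mul,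
      (Complex.isPrimitiveRoot_exp m hm).sum_Ico_zpow_mul_eq_ite a (d k) (hd k)]
    split_ifs <;> simp [hm]
  calc (if d = 0 then 1 else 0 : ℂ) = ∏ k, (if d k = 0 then 1 else 0 : ℂ) := by
        rw [prod_boole]; simp [funext_iff]
    _ = _ := by
      simp only [hcoord, prod_mul_distrib, prod_const, card_univ, prod_univ_sum, ← Complex.exp_sum,
        dotProduct, Int.cast_sum, sum_mul]

theorem card_collisions_eq (A : Matrix κ ι ℤ) {m : ℕ} (a : ℤ)
    (hA : ∀ S ∈ signVectors ι, ∀ S' ∈ signVectors ι, ∀ k, |(A *ᵥ S) k - (A *ᵥ S') k| < m) :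
    (#{SS ∈ signVectors ι ×ˢ signVectors ι | A *ᵥ SS.1 = A *ᵥ SS.2} : ℝ) =
      (m : ℝ)⁻¹ ^ Fintype.card κ * ∑ J ∈ Fintype.piFinset fun _ : κ => Ico a (a + m),
        (∏ i, 2 * cos (2 * π * (J ᵥ* A) i / m)) ^ 2 := by
  set c : ℂ := 2 * π * Complex.I / m with hc
  have hpair : ∀ SS ∈ signVectors ι ×ˢ signVectors ι,
      (if A *ᵥ SS.1 = A *ᵥ SS.2 then 1 else 0 : ℂ) = (m : ℂ)⁻¹ ^ Fintype.card κ *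
        ∑ J ∈ Fintype.piFinset fun _ : κ => Ico a (a + m),
          Complex.exp (((J ᵥ* A) ⬝ᵥ SS.1 : ℤ) * c) * Complex.exp (((J ᵥ* A) ⬝ᵥ SS.2 : ℤ) * -c) := by
    rintro ⟨S, S'⟩ hSS
    rw [mem_product] at hSS
    have h := boole_eq_zero_eq_sum_exp a (A *ᵥ S - A *ᵥ S') (hA S hSS.1 S' hSS.2)
    simp only [sub_eq_zero] at h
    rw [h]
    refine congrArg _ (sum_congr rfl fun J _ => ?_)
    rw [← Complex.exp_add, ← mulVec_sub, dotProduct_mulVec, dotProduct_sub, hc]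
    push_cast
    ring_nf
  have hcosh : ∀ x : ℤ, Complex.cosh (x * c) = Complex.cos (2 * π * x / m) := by
    intro x
    rw [← Complex.cosh_mul_I, hc]
    ring_nf
  apply Complex.ofReal_injective
  push_cast
  rw [natCast_card_filter, sum_congr rfl hpair, ← mul_sum, sum_comm]
  refine congrArg _ (sum_congr rfl fun J _ => ?_)
  rw [sum_product]
  dsimp only
  rw [← sum_mul_sum, sum_signVectors_exp_dotProduct, sum_signVectors_exp_dotProduct]
  simp only [mul_neg, Complex.cosh_neg, hcosh]
  ring

end Fourier

section Grid

open Matrix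

variable {f l : ℕ}

abbrev Column (f l : ℕ) := (b : Fin f) × ({j // j ≠ b} → Fin l)

def columnOf (b : Fin f) (p : Fin f → Fin l) : Column f l := ⟨b, (Equiv.funSplitAt b (Fin l) p).2⟩

variable (f l) in
def incidence : Matrix (Column f l) (Fin f → Fin l) ℤ :=
  fun k p => if columnOf k.1 p = k then 1 else 0

theorem card_column : Fintype.card (Column f l) = f * l ^ (f - 1) := by
  simp [Fintype.card_subtype_compl]

theorem incidence_mulVec_mk (S : (Fin f → Fin l) → ℤ) (b : Fin f) (z : {j // j ≠ b} → Fin l) :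
    (incidence f l *ᵥ S) ⟨b, z⟩ = ∑ x, S ((Equiv.funSplitAt b (Fin l)).symm (x, z)) := by
  rw [mulVec, dotProduct, ← (Equiv.funSplitAt b (Fin l)).symm.sum_comp, Fintype.sum_prod_type]
  simp [incidence, columnOf]

theorem incidence_mulVec_columnOf (S : (Fin f → Fin l) → ℤ) (b : Fin f) (y : Fin f → Fin l) :
    (incidence f l *ᵥ S) (columnOf b y) = colSum f l S b y := by
  rw [columnOf, incidence_mulVec_mk, colSum]
  congr! 2 with x

theorem abs_incidence_mulVec_le {S : (Fin f → Fin l) → ℤ} (hS : S ∈ signVectors _)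
    (k : Column f l) : |(incidence f l *ᵥ S) k| ≤ l := by
  obtain ⟨b, z⟩ := k
  rw [incidence_mulVec_mk]
  refine (abs_sum_le_sum_abs _ _).trans ?_
  have h1 : ∀ p, |S p| = 1 := fun p => by
    rcases (by simpa [signVectors] using Fintype.mem_piFinset.mp hS p : S p = 1 ∨ S p = -1)
      with h | h <;> simp [h]
  simp [h1]

theorem vecMul_incidence (J : Column f l → ℤ) (p : Fin f → Fin l) :
    (J ᵥ* incidence f l) p = ∑ b, J (columnOf b p) := by
  simp [vecMul, dotProduct, incidence, Fintype.sum_sigma, columnOf]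

theorem abs_vecMul_incidence_le {K : ℕ} {J : Column f l → ℤ} (hJ : ∀ k, |J k| ≤ K)
    (p : Fin f → Fin l) : |(J ᵥ* incidence f l) p| ≤ f * K := by
  rw [vecMul_incidence]
  refine (abs_sum_le_sum_abs _ _).trans ?_
  simpa using sum_le_sum fun b (_ : b ∈ univ) => hJ (columnOf b p)

theorem le_sq_prod_two_cos_vecMul_incidence (hl : 2 ≤ l) {K : ℕ} {m : ℝ} (hm0 : 0 < m)
    (hm : 2 * π * f * K * √l ≤ m) {J : Column f l → ℤ} (hJ : ∀ k, |J k| ≤ K) :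
    (4 * exp (-(2 / l))) ^ (l ^ f) ≤ (∏ p, 2 * cos (2 * π * (J ᵥ* incidence f l) p / m)) ^ 2 := by
  have hl0 : (0 : ℝ) < l := by positivity
  have hε : (1 / l : ℝ) ≤ 1 / 2 := by gcongr; exact_mod_cast hl
  have hx : ∀ p, (2 * π * (J ᵥ* incidence f l) p / m) ^ 2 ≤ 1 / l := by
    intro p
    have hτ : |((J ᵥ* incidence f l) p : ℝ)| ≤ f * K := by
      exact_mod_cast abs_vecMul_incidence_le hJ p
    have habs : |2 * π * (J ᵥ* incidence f l) p / m| ≤ 1 / √l := by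
      rw [abs_div, abs_mul, abs_of_pos hm0, abs_of_pos (by positivity), div_le_div_iff₀ hm0
        (by positivity)]
      have : 2 * π * |((J ᵥ* incidence f l) p : ℝ)| * √l ≤ 2 * π * (f * K) * √l := by gcongr
      linarith
    calc _ = |2 * π * (J ᵥ* incidence f l) p / m| ^ 2 := (sq_abs _).symm
      _ ≤ (1 / √l) ^ 2 := by gcongr
      _ = 1 / l := by rw [div_pow, sq_sqrt hl0.le, one_pow]
  simpa [mul_div_assoc, div_eq_mul_inv] using le_sq_prod_two_cos hε hx

theorem abs_sub_incidence_mulVec_lt {S S' : (Fin f → Fin l) → ℤ} (hS : S ∈ signVectors _)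
    (hS' : S' ∈ signVectors _) (k : Column f l) :
    |(incidence f l *ᵥ S) k - (incidence f l *ᵥ S') k| < (2 * l + 1 : ℕ) := by
  have h := abs_le.mp (abs_incidence_mulVec_le hS k)
  have h' := abs_le.mp (abs_incidence_mulVec_le hS' k)
  rw [abs_lt]
  push_cast
  omega

theorem exists_weight_radius (hf : 1 ≤ f) (hl : 1 ≤ l) :
    ∃ K : ℕ, K ≤ l ∧ 2 * π * f * K * √l ≤ (2 * l + 1 : ℕ) ∧
      1 / (2 * π * f * √l) ≤ ((2 * l + 1 : ℕ) : ℝ)⁻¹ * (2 * K + 1) := by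
  have hfl : 1 ≤ (f : ℝ) * √l := one_le_mul_of_one_le_of_one_le (by exact_mod_cast hf)
    (one_le_sqrt.mpr (by exact_mod_cast hl))
  have hden : 6 ≤ 2 * π * f * √l := by nlinarith [pi_gt_three]
  set r : ℝ := (2 * l + 1 : ℕ) / (2 * π * f * √l) with hr
  have hKr : (⌊r⌋₊ : ℝ) ≤ r := Nat.floor_le (by positivity)
  refine ⟨⌊r⌋₊, Nat.lt_succ_iff.mp ((Nat.floor_lt' (by omega)).mpr ?_), ?_, ?_⟩
  · rw [hr, div_lt_iff₀ (by positivity)]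
    push_cast
    nlinarith
  · have := (le_div_iff₀ (by positivity)).mp hKr
    linarith
  · calc 1 / (2 * π * f * √l) = ((2 * l + 1 : ℕ) : ℝ)⁻¹ * r := by
          rw [hr]; field_simp [(by positivity : ((2 * l + 1 : ℕ) : ℝ) ≠ 0)]
      _ ≤ _ := by gcongr; linarith [Nat.lt_floor_add_one r, hKr]

theorem le_sum_sq_prod_two_cos_vecMul_incidence (hl : 2 ≤ l) {K : ℕ} (hKl : K ≤ l)
    (hK : 2 * π * f * K * √l ≤ (2 * l + 1 : ℕ)) :
    ((2 * K + 1) ^ (f * l ^ (f - 1)) : ℝ) * (4 * exp (-(2 / l))) ^ (l ^ f) ≤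
      ∑ J ∈ Fintype.piFinset fun _ : Column f l => Ico (-l : ℤ) (-l + (2 * l + 1 : ℕ)),
        (∏ p, 2 * cos (2 * π * (J ᵥ* incidence f l) p / (2 * l + 1 : ℕ))) ^ 2 := by
  have hbox : Fintype.piFinset (fun _ : Column f l => Icc (-K : ℤ) K) ⊆
      Fintype.piFinset fun _ => Ico (-l : ℤ) (-l + (2 * l + 1 : ℕ)) :=
    Fintype.piFinset_subset _ _ fun _ x hx => by
      simp only [mem_Icc, mem_Ico] at hx ⊢
      push_cast
      omega
  calc ((2 * K + 1) ^ (f * l ^ (f - 1)) : ℝ) * (4 * exp (-(2 / l))) ^ (l ^ f)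
      = ∑ J ∈ Fintype.piFinset (fun _ : Column f l => Icc (-K : ℤ) K),
          (4 * exp (-(2 / l))) ^ (l ^ f) := by
        rw [sum_const, Fintype.card_piFinset, prod_const, card_univ, card_column, Int.card_Icc,
          show ((K : ℤ) + 1 - -K).toNat = 2 * K + 1 by omega, nsmul_eq_mul]
        push_cast
        rfl
    _ ≤ ∑ J ∈ Fintype.piFinset (fun _ : Column f l => Icc (-K : ℤ) K),
          (∏ p, 2 * cos (2 * π * (J ᵥ* incidence f l) p / (2 * l + 1 : ℕ))) ^ 2 :=
        sum_le_sum fun J hJ => le_sq_prod_two_cos_vecMul_incidence hl (by positivity) hK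
          fun k => abs_le.mpr (by simpa using Fintype.mem_piFinset.mp hJ k)
    _ ≤ _ := sum_le_sum_of_subset_of_nonneg hbox fun _ _ _ => sq_nonneg _

theorem card_collisions_incidence_ge (hf : 1 ≤ f) (hl : 2 ≤ l) :
    (2 : ℝ) ^ (l ^ f) * 2 ^ (l ^ f) * (exp (-2) / (2 * π) / (f * √l)) ^ (f * l ^ (f - 1)) ≤
      #{SS ∈ signVectors _ ×ˢ signVectors _ | incidence f l *ᵥ SS.1 = incidence f l *ᵥ SS.2} := by
  rw [card_collisions_eq _ (-l) fun S hS S' hS' => abs_sub_incidence_mulVec_lt hS hS', card_column]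
  obtain ⟨K, hKl, hK, hratio⟩ := exists_weight_radius (l := l) hf (by omega)
  have hexp : exp (-2) ^ (f * l ^ (f - 1)) ≤ exp (-2) ^ (l ^ (f - 1)) :=
    pow_le_pow_of_le_one (exp_nonneg _) (exp_le_one_iff.mpr (by norm_num))
      (Nat.le_mul_of_pos_left _ (by omega))
  calc (2 : ℝ) ^ (l ^ f) * 2 ^ (l ^ f) * (exp (-2) / (2 * π) / (f * √l)) ^ (f * l ^ (f - 1))
      = 4 ^ (l ^ f) * exp (-2) ^ (f * l ^ (f - 1)) *
          (1 / (2 * π * f * √l)) ^ (f * l ^ (f - 1)) := by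
        rw [← mul_pow, mul_assoc, ← mul_pow]
        norm_num
        ring
    _ ≤ 4 ^ (l ^ f) * exp (-2) ^ (l ^ (f - 1)) *
          (((2 * l + 1 : ℕ) : ℝ)⁻¹ * (2 * K + 1)) ^ (f * l ^ (f - 1)) := by
        gcongr
    _ = ((2 * l + 1 : ℕ) : ℝ)⁻¹ ^ (f * l ^ (f - 1)) *
          ((2 * K + 1) ^ (f * l ^ (f - 1)) * (4 * exp (-(2 / l))) ^ (l ^ f)) := by
        rw [mul_pow, mul_pow, exp_neg_div_pow 2 hf (by omega)]
        ring
    _ ≤ _ := mul_le_mul_of_nonneg_left (le_sum_sq_prod_two_cos_vecMul_incidence hl hKl hK)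
        (by positivity)

theorem exists_card_fiber_incidence_mulVec_ge (hf : 1 ≤ f) (hl : 2 ≤ l) :
    ∃ S₀ : (Fin f → Fin l) → ℤ, (2 : ℝ) ^ (l ^ f) *
      (exp (-2) / (2 * π) / (f * √l)) ^ (f * l ^ (f - 1)) ≤
        #{S ∈ signVectors _ | incidence f l *ᵥ S = incidence f l *ᵥ S₀} := by
  obtain ⟨S₀, -, hS₀⟩ := exists_card_collisions_le (s := signVectors (Fin f → Fin l))
    ⟨1, by simp [signVectors]⟩ (incidence f l *ᵥ ·)
  have hcard : #(signVectors (Fin f → Fin l)) = 2 ^ (l ^ f) := by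
    simp [signVectors, Fintype.card_piFinset]
  refine ⟨S₀, le_of_mul_le_mul_left ?_ (by positivity : (0 : ℝ) < 2 ^ (l ^ f))⟩
  rw [← mul_assoc]
  refine (card_collisions_incidence_ge hf hl).trans ?_
  exact_mod_cast hcard ▸ hS₀

theorem coe_filter_incidence_mulVec_eq_subset (S₀ : (Fin f → Fin l) → ℤ) :
    (↑{S ∈ signVectors (Fin f → Fin l) | incidence f l *ᵥ S = incidence f l *ᵥ S₀} :
        Set ((Fin f → Fin l) → ℤ)) ⊆
      {S | (∀ p, S p = 1 ∨ S p = -1) ∧ ∀ b y, colSum f l S b y = colSum f l S₀ b y} := by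
  intro S hS
  simp only [coe_filter, signVectors, Fintype.mem_piFinset, mem_insert, mem_singleton] at hS
  exact ⟨hS.1, fun b y => by rw [← incidence_mulVec_columnOf, hS.2, incidence_mulVec_columnOf]⟩

end Grid

/-- there is a constant `c > 0` such that for every `f ≥ 1` and every even
`l ≥ 2` there is a choice of integers `M_C`, one per column, such that the number of
zero-energy assignments (±1 assignments whose every column sum equals the prescribed `M_C`)
is at least `2^N * (c/(f·√l))^{n_C}` with `N = l^f` and `n_C = f·l^(f-1)`. -/
theorem stmt5 :
    ∃ c : ℝ, 0 < c ∧
      ∀ f l : ℕ, 1 ≤ f → 2 ≤ l → Even l →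
        ∃ M : Fin f → (Fin f → Fin l) → ℤ,
          (2 : ℝ) ^ (l ^ f) * (c / (f * Real.sqrt l)) ^ (f * l ^ (f - 1)) ≤
            (Set.ncard {S : (Fin f → Fin l) → ℤ |
              (∀ p, S p = 1 ∨ S p = -1) ∧ ∀ b y, colSum f l S b y = M b y} : ℝ) := by
  refine ⟨exp (-2) / (2 * π), by positivity, fun f l hf hl _ => ?_⟩
  obtain ⟨S₀, hS₀⟩ := exists_card_fiber_incidence_mulVec_ge hf hl
  refine ⟨colSum f l S₀, hS₀.trans ?_⟩
  rw [← Set.ncard_coe_finset]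
  exact_mod_cast Set.ncard_le_ncard (coe_filter_incidence_mulVec_eq_subset S₀)
    ((signVectors _).finite_toSet.subset fun S hS => by simpa [signVectors] using hS.1)
end

section
/- Fix integers f ≥ 1 and l ≥ 2 and integers M_C, one for each column C of the grid {1,…,l}^f. If S and S' are two distinct assignments {1,…,l}^f → {−1,+1} such that ∑_{i ∈ C} S i = M_C and ∑_{i ∈ C} S' i = M_C for every column C, then S and S' differ in at least 2^f grid points (their Hamming distance is at least 2^f). -/
open Finset

/-!
The difference `S - S'` has zero sum along every column, so each point of its support meets, on
every column through it, a second point of the support. A nonempty finite set with this property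
has at least `2 ^ f` points: two distinct values of the first coordinate occur in it, and each of
the two corresponding slices is again such a set, one dimension lower.
-/

section

variable {α : Type*}

def HasLineNeighbors {n : ℕ} (A : Finset (Fin n → α)) : Prop :=
  ∀ p ∈ A, ∀ b, ∃ x ≠ p b, Function.update p b x ∈ A

namespace HasLineNeighbors

noncomputable def slice {n : ℕ} (A : Finset (Fin (n + 1) → α)) (x : α) : Finset (Fin n → α) :=
  A.preimage (fun r => Fin.cons x r) (Fin.cons_right_injective (α := fun _ => α) x).injOn

theorem mem_slice {n : ℕ} {A : Finset (Fin (n + 1) → α)} {x : α} {r : Fin n → α} :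
    r ∈ slice A x ↔ Fin.cons x r ∈ A :=
  Finset.mem_preimage

theorem slice_hasLineNeighbors {n : ℕ} {A : Finset (Fin (n + 1) → α)}
    (hA : HasLineNeighbors A) (x : α) : HasLineNeighbors (slice A x) := by
  intro r hr b
  obtain ⟨y, hy, hmem⟩ := hA _ (mem_slice.1 hr) b.succ
  exact ⟨y, hy, mem_slice.2 (by rwa [Fin.cons_update])⟩

theorem card_slice_add_card_slice_le {n : ℕ} (A : Finset (Fin (n + 1) → α)) {x y : α}
    (hxy : x ≠ y) : #(slice A x) + #(slice A y) ≤ #A := by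
  classical
  let cons z : (Fin n → α) ↪ (Fin (n + 1) → α) := ⟨_, Fin.cons_right_injective (α := fun _ => α) z⟩
  have hsub z : (slice A z).map (cons z) ⊆ A := map_subset_iff_subset_preimage.2 subset_rfl
  have hdisj : Disjoint ((slice A x).map (cons x)) ((slice A y).map (cons y)) := by
    simp only [disjoint_left, mem_map]
    rintro _ ⟨r, -, rfl⟩ ⟨s, -, hs⟩
    exact hxy (by simpa [cons] using (congrFun hs 0).symm)
  calc #(slice A x) + #(slice A y) = #((slice A x).map (cons x) ∪ (slice A y).map (cons y)) := by
        rw [card_union_of_disjoint hdisj, card_map, card_map]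
    _ ≤ #A := card_le_card (union_subset (hsub x) (hsub y))

theorem two_pow_le_card {n : ℕ} {A : Finset (Fin n → α)} (hA : HasLineNeighbors A)
    (hne : A.Nonempty) : 2 ^ n ≤ #A := by
  induction n with
  | zero => simpa using hne
  | succ n ih =>
    obtain ⟨p, hp⟩ := hne
    obtain ⟨y, hy, hpy⟩ := hA p hp 0
    have hslice : ∀ z, Fin.cons z (Fin.tail p) ∈ A → 2 ^ n ≤ #(slice A z) := fun z hz =>
      ih (slice_hasLineNeighbors hA z) ⟨_, mem_slice.2 hz⟩
    have hpCons : Fin.cons (p 0) (Fin.tail p) ∈ A := by rwa [Fin.cons_self_tail]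
    have hyCons : Fin.cons y (Fin.tail p) ∈ A := by
      rwa [← Fin.update_cons_zero (p 0), Fin.cons_self_tail]
    calc 2 ^ (n + 1) = 2 ^ n + 2 ^ n := by ring
      _ ≤ #(slice A (p 0)) + #(slice A y) := add_le_add (hslice _ hpCons) (hslice _ hyCons)
      _ ≤ #A := card_slice_add_card_slice_le A hy.symm

end HasLineNeighbors

theorem hasLineNeighbors_filter_ne_zero_of_sum_update_eq_zero {M : Type*} [AddCommMonoid M]
    [DecidableEq M] [Fintype α] {n : ℕ} {D : (Fin n → α) → M}
    (hD : ∀ b p, ∑ x, D (Function.update p b x) = 0) :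
    HasLineNeighbors (univ.filter fun p => D p ≠ 0) := by
  intro p hp b
  by_contra! hlone
  refine (mem_filter.1 hp).2 ?_
  rw [← hD b p, sum_eq_single (p b) (fun x _ hx => ?_) (by simp), Function.update_eq_self]
  by_contra hx'
  exact hlone x hx (mem_filter.2 ⟨mem_univ _, hx'⟩)

end

theorem stmt6_general (f l : ℕ)
    (S S' : (Fin f → Fin l) → ℤ)
    (hM : ∀ b y, colSum f l S b y = colSum f l S' b y)
    (hne : S ≠ S') :
    2 ^ f ≤ (univ.filter (fun p => S p ≠ S' p)).card := by
  have hlines : ∀ b p, ∑ x, (S - S') (Function.update p b x) = 0 := fun b p => by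
    simpa [colSum, sub_eq_zero] using hM b p
  have hsupport : (univ.filter fun p => S p ≠ S' p) = univ.filter fun p => (S - S') p ≠ 0 := by
    simp only [Pi.sub_apply, sub_ne_zero]
  obtain ⟨p, hp⟩ := Function.ne_iff.1 hne
  rw [hsupport]
  exact (hasLineNeighbors_filter_ne_zero_of_sum_update_eq_zero hlines).two_pow_le_card
    ⟨p, mem_filter.2 ⟨mem_univ _, sub_ne_zero.2 hp⟩⟩

/-- two distinct ±1 assignments on the grid `{1,…,l}^f` with identical column
sums differ in at least `2^f` grid points. -/
theorem stmt6 (f l : ℕ) (hf : 1 ≤ f) (hl : 2 ≤ l)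
    (S S' : (Fin f → Fin l) → ℤ)
    (hS : ∀ p, S p = 1 ∨ S p = -1) (hS' : ∀ p, S' p = 1 ∨ S' p = -1)
    (hM : ∀ b y, colSum f l S b y = colSum f l S' b y)
    (hne : S ≠ S') :
    2 ^ f ≤ (univ.filter (fun p => S p ≠ S' p)).card :=
  stmt6_general f l S S' hM hne
end

section
/- There exists a constant C > 0 such that the following holds. Let σ_1, …, σ_n be independent random variables, each uniform on {−1, +1}, let a_1, …, a_n be real numbers with |a_i| ≥ 1 for all i, and let Σ = ∑_{i=1}^n a_i σ_i. Then for every δ ≥ 1 and every real h, Pr(|Σ + h| ≤ δ) ≤ C·δ/√n. -/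
/-!
Erdős's proof of the Littlewood–Offord bound. If `S` is the set of indices where `σ i` agrees
with the sign of `a i`, then `Σ = 2 ∑_{i ∈ S} |a i| - ∑ |a i|`, and `σ ↦ S` is injective, so
`|Σ + h| ≤ δ` confines `∑_{i ∈ S} |a i|` to an interval of length `δ`. Since every `|a i| ≥ 1`,
the sets `S` whose sum lies in a fixed half-open interval of length `1` form an antichain, so by
Sperner there are at most `n.choose (n / 2) ≤ 2 ^ n / √n` of them; and `⌊δ⌋ + 1 ≤ 2δ` such
intervals cover an interval of length `δ`.
-/

open Finset

namespace Nat

theorem centralBinom_sq_mul_le (m : ℕ) : centralBinom m ^ 2 * (2 * m + 1) ≤ 16 ^ m := by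
  induction m with
  | zero => simp
  | succ m ih =>
    refine Nat.le_of_mul_le_mul_left ?_ (by positivity : 0 < (m + 1) ^ 2)
    calc (m + 1) ^ 2 * (centralBinom (m + 1) ^ 2 * (2 * (m + 1) + 1))
        = ((m + 1) * centralBinom (m + 1)) ^ 2 * (2 * m + 3) := by ring
      _ = (centralBinom m ^ 2 * (2 * m + 1)) * (4 * (2 * m + 1) * (2 * m + 3)) := by
          rw [succ_mul_centralBinom_succ]; ring
      _ ≤ 16 ^ m * (4 * (2 * m + 1) * (2 * m + 3)) := Nat.mul_le_mul_right _ ih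
      _ ≤ 16 ^ m * (16 * (m + 1) ^ 2) := Nat.mul_le_mul_left _ (by nlinarith)
      _ = (m + 1) ^ 2 * 16 ^ (m + 1) := by ring

theorem two_mul_choose_two_mul_add_one (m : ℕ) :
    2 * (2 * m + 1).choose m = centralBinom (m + 1) := by
  rw [centralBinom_eq_two_mul_choose, show 2 * (m + 1) = 2 * m + 1 + 1 by ring,
    choose_succ_succ', choose_symm_half]
  ring

theorem choose_half_sq_mul_le (n : ℕ) : n.choose (n / 2) ^ 2 * (n + 1) ≤ 4 ^ n := by
  obtain ⟨m, rfl | rfl⟩ := n.even_or_odd'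
  · have := centralBinom_sq_mul_le m
    rw [centralBinom_eq_two_mul_choose] at this
    simpa [pow_mul] using this
  · have hm : (2 * m + 1) / 2 = m := by omega
    rw [hm]
    refine Nat.le_of_mul_le_mul_left ?_ (by norm_num : 0 < 4)
    calc 4 * ((2 * m + 1).choose m ^ 2 * (2 * m + 1 + 1))
        ≤ (2 * (2 * m + 1).choose m) ^ 2 * (2 * (m + 1) + 1) := by nlinarith
      _ ≤ 16 ^ (m + 1) := by rw [two_mul_choose_two_mul_add_one]; exact centralBinom_sq_mul_le _
      _ = 4 * 4 ^ (2 * m + 1) := by rw [show (16 : ℕ) = 4 ^ 2 by rfl, ← pow_mul]; ring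

end Nat

theorem choose_half_mul_sqrt_le (n : ℕ) : (n.choose (n / 2) : ℝ) * √n ≤ 2 ^ n := by
  refine (pow_le_pow_iff_left₀ (by positivity) (by positivity) two_ne_zero).1 ?_
  have h : (n.choose (n / 2) : ℝ) ^ 2 * (n + 1) ≤ 4 ^ n := by exact_mod_cast n.choose_half_sq_mul_le
  rw [mul_pow, Real.sq_sqrt n.cast_nonneg, ← pow_mul, pow_mul']
  norm_num
  nlinarith [sq_nonneg (n.choose (n / 2) : ℝ)]

theorem mul_sign_eq_ite_abs (a : ℝ) (σ : Bool) :
    a * (if σ then 1 else -1) = if σ = decide (0 < a) then |a| else -|a| := by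
  rcases lt_trichotomy a 0 with ha | rfl | ha
  · cases σ <;> simp [ha, ha.not_gt, abs_of_neg]
  · cases σ <;> simp
  · cases σ <;> simp [ha, abs_of_pos]

section LittlewoodOfford

variable {ι : Type*} [Fintype ι]

theorem card_sum_mem_Ico_le_choose [DecidableEq ι] (b : ι → ℝ) (hb : ∀ i, 1 ≤ b i) (x : ℝ) :
    #{s : Finset ι | ∑ i ∈ s, b i ∈ Set.Ico x (x + 1)}
      ≤ (Fintype.card ι).choose (Fintype.card ι / 2) := by
  refine IsAntichain.sperner fun s hs t ht hne hst => ?_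
  simp only [coe_filter, mem_univ, true_and, Set.mem_ofPred_eq, Set.mem_Ico] at hs ht
  obtain ⟨j, hjt, hjs⟩ := exists_of_ssubset (hst.lt_of_ne hne)
  -- a strict superset gains at least the weight `b j ≥ 1`, too much for an interval of length 1
  have : ∑ i ∈ insert j s, b i ≤ ∑ i ∈ t, b i :=
    sum_le_sum_of_subset_of_nonneg (insert_subset hjt hst) fun i _ _ => zero_le_one.trans (hb i)
  rw [sum_insert hjs] at this
  linarith [hb j]

theorem card_sum_mem_Icc_le [DecidableEq ι] (b : ι → ℝ) (hb : ∀ i, 1 ≤ b i) (x r : ℝ) :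
    #{s : Finset ι | ∑ i ∈ s, b i ∈ Set.Icc x (x + r)}
      ≤ (⌊r⌋₊ + 1) * (Fintype.card ι).choose (Fintype.card ι / 2) := by
  have hcover : ({s | ∑ i ∈ s, b i ∈ Set.Icc x (x + r)} : Finset (Finset ι)) ⊆
      (range (⌊r⌋₊ + 1)).biUnion fun k : ℕ =>
        {s | ∑ i ∈ s, b i ∈ Set.Ico (x + k) (x + k + 1)} := by
    intro s hs
    simp only [mem_filter, mem_univ, true_and, Set.mem_Icc] at hs
    refine mem_biUnion.2 ⟨⌊∑ i ∈ s, b i - x⌋₊, ?_, ?_⟩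
    · exact mem_range.2 (Nat.lt_succ_of_le (Nat.floor_le_floor (by linarith)))
    · have h₁ := Nat.floor_le (sub_nonneg.2 hs.1)
      have h₂ := Nat.lt_floor_add_one (∑ i ∈ s, b i - x)
      simp only [mem_filter, mem_univ, true_and, Set.mem_Ico]
      constructor <;> linarith
  calc _ ≤ _ := card_le_card hcover
    _ ≤ ∑ k ∈ range (⌊r⌋₊ + 1), #{s : Finset ι | ∑ i ∈ s, b i ∈ Set.Ico (x + k) (x + k + 1)} :=
        card_biUnion_le
    _ ≤ ∑ _k ∈ range (⌊r⌋₊ + 1), (Fintype.card ι).choose (Fintype.card ι / 2) :=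
        sum_le_sum fun k _ => card_sum_mem_Ico_le_choose b hb (x + k)
    _ = _ := by rw [sum_const, card_range, smul_eq_mul]

noncomputable def signMatchSet (a : ι → ℝ) (σ : ι → Bool) : Finset ι :=
  {i | σ i = decide (0 < a i)}

theorem sum_mul_sign_eq (a : ι → ℝ) (σ : ι → Bool) :
    ∑ i, a i * (if σ i then 1 else -1) = 2 * ∑ i ∈ signMatchSet a σ, |a i| - ∑ i, |a i| := by
  simp_rw [mul_sign_eq_ite_abs]
  rw [sum_ite, sum_neg_distrib, signMatchSet,
    ← sum_filter_add_sum_filter_not univ (fun i => σ i = decide (0 < a i)) fun i => |a i|]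
  ring

theorem signMatchSet_injective (a : ι → ℝ) : Function.Injective (signMatchSet a) := by
  intro σ τ hστ
  funext i
  have hi : σ i = decide (0 < a i) ↔ τ i = decide (0 < a i) := by
    simpa [signMatchSet] using congrArg (i ∈ ·) hστ
  revert hi
  cases σ i <;> cases τ i <;> cases decide (0 < a i) <;> simp

theorem card_abs_sum_mul_sign_add_le [DecidableEq ι] (a : ι → ℝ) (ha : ∀ i, 1 ≤ |a i|)
    (h δ : ℝ) :
    #{σ : ι → Bool | |∑ i, a i * (if σ i then 1 else -1) + h| ≤ δ}
      ≤ (⌊δ⌋₊ + 1) * (Fintype.card ι).choose (Fintype.card ι / 2) := by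
  set x := (∑ i, |a i| - h - δ) / 2 with hx
  calc _ ≤ #{s : Finset ι | ∑ i ∈ s, |a i| ∈ Set.Icc x (x + δ)} := by
        refine card_le_card_of_injOn (signMatchSet a) (fun σ hσ => ?_)
          (signMatchSet_injective a).injOn
        simp only [coe_filter, mem_univ, true_and, Set.mem_ofPred_eq, Set.mem_Icc] at hσ ⊢
        rw [sum_mul_sign_eq, abs_le] at hσ
        constructor <;> linarith [hx]
    _ ≤ _ := card_sum_mem_Icc_le _ ha x δ

end LittlewoodOfford

/-- there is `C > 0` such that for independent uniform ±1 variables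
`σ_1, …, σ_n` (`n ≥ 1`) and reals `a_i` with `|a_i| ≥ 1`, for every `δ ≥ 1` and every `h`,
`Pr(|∑ a_i σ_i + h| ≤ δ) ≤ C·δ/√n` (probabilities as counting ratios over `{±1}^n`). -/
theorem stmt10 :
    ∃ C : ℝ, 0 < C ∧
      ∀ (n : ℕ) (a : Fin n → ℝ), 1 ≤ n → (∀ i, 1 ≤ |a i|) →
        ∀ δ h : ℝ, 1 ≤ δ →
          (Set.ncard {σ : Fin n → Bool |
              |(∑ i, a i * (if σ i then 1 else -1)) + h| ≤ δ} : ℝ) / 2 ^ n ≤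
            C * δ / Real.sqrt n := by
  refine ⟨2, two_pos, fun n a hn ha δ h hδ => ?_⟩
  have hcard := card_abs_sum_mul_sign_add_le a ha h δ
  rw [Fintype.card_fin] at hcard
  have hfloor : (⌊δ⌋₊ + 1 : ℝ) ≤ 2 * δ := by linarith [Nat.floor_le (zero_le_one.trans hδ)]
  have hsqrt : 0 < √n := Real.sqrt_pos.2 (by exact_mod_cast hn)
  rw [Set.ncard_eq_toFinset_card', Set.toFinset_ofPred, div_le_div_iff₀ (by positivity) hsqrt]
  calc _ ≤ ((⌊δ⌋₊ + 1) * n.choose (n / 2) : ℕ) * √n := by gcongr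
    _ = (⌊δ⌋₊ + 1 : ℝ) * (n.choose (n / 2) * √n) := by push_cast; ring
    _ ≤ 2 * δ * 2 ^ n := by gcongr; exact choose_half_mul_sqrt_le n
end

section
/- There exists a constant C > 0 such that the following holds. Let σ_1, …, σ_m be independent random variables, each uniform on {−1, +1}, let a_1, …, a_m be real numbers, and let Σ = ∑_{i=1}^m a_i σ_i. Suppose there are at least n indices i with |a_i| ≥ a_min for some a_min > 0 with a_min ≤ δ. Then for every real h, Pr(|Σ + h| ≤ δ) ≤ C·(δ/a_min)/√n. -/
open Finset

/-! Erdős's proof of the Littlewood–Offord inequality. Sending `σ` to the set `t` of indices with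
`σ i` agreeing with the sign of `a i` turns `∑ a i σ i` into `2 ∑_{i ∈ t} |a i| - ∑ |a i|`. If every
`|a i| ≥ r`, the sets `t` whose weight lies in a half-open window of length `r` form an antichain,
so by Sperner there are at most `C(k, k/2) ≤ √2 · 2^k / √k` of them, and `⌊δ/r⌋ + 1` such windows
cover an interval of length `δ`. Coordinates with small `|a i|` are fixed and summed over, which
costs exactly the factor `2 ^ #{i | |a i| < r}` absorbed by the normalisation. -/

namespace Nat

theorem centralBinom_sq_mul_succ_le (n : ℕ) : n.centralBinom ^ 2 * (n + 1) ≤ 16 ^ n := by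
  induction n with
  | zero => simp
  | succ n ih =>
    have hpoly : (2 * n + 1) ^ 2 * (n + 2) ≤ 4 * (n + 1) ^ 3 := by ring_nf; omega
    refine le_of_mul_le_mul_left ?_ (pow_pos n.succ_pos 2)
    calc (n + 1) ^ 2 * ((n + 1).centralBinom ^ 2 * (n + 1 + 1))
        = 2 ^ 2 * n.centralBinom ^ 2 * ((2 * n + 1) ^ 2 * (n + 2)) := by
          rw [← mul_assoc, ← mul_pow, succ_mul_centralBinom_succ]; ring
      _ ≤ 2 ^ 2 * n.centralBinom ^ 2 * (4 * (n + 1) ^ 3) := by gcongr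
      _ = (n + 1) ^ 2 * (16 * (n.centralBinom ^ 2 * (n + 1))) := by ring
      _ ≤ (n + 1) ^ 2 * (16 * 16 ^ n) := by gcongr
      _ = (n + 1) ^ 2 * 16 ^ (n + 1) := by ring

theorem choose_half_sq_mul_le_s11 (k : ℕ) : k.choose (k / 2) ^ 2 * k ≤ 2 * 4 ^ k := by
  obtain ⟨j, rfl | rfl⟩ := k.even_or_odd'
  · have h := centralBinom_sq_mul_succ_le j
    rw [centralBinom_eq_two_mul_choose] at h
    have h4 : 4 ^ (2 * j) = 16 ^ j := by rw [pow_mul]; rfl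
    rw [Nat.mul_div_cancel_left j two_pos, h4]
    nlinarith
  · have h := centralBinom_sq_mul_succ_le (j + 1)
    have hmid : (j + 1).centralBinom = 2 * (2 * j + 1).choose j := by
      rw [centralBinom_eq_two_mul_choose, show 2 * (j + 1) = 2 * j + 1 + 1 by ring,
        choose_succ_succ', choose_symm_half]
      ring
    have h4 : 4 ^ (2 * j + 1) = 4 * 16 ^ j := by rw [pow_succ, pow_mul]; ring
    have h16 : 16 ^ (j + 1) = 16 * 16 ^ j := by ring
    rw [hmid, h16] at h
    rw [show (2 * j + 1) / 2 = j by omega, h4]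
    nlinarith

theorem cast_choose_half_le {k : ℕ} (hk : 0 < k) :
    (k.choose (k / 2) : ℝ) ≤ √2 * 2 ^ k / √k := by
  have hsq : ((k.choose (k / 2) : ℝ) * √k) ^ 2 ≤ (√2 * 2 ^ k) ^ 2 := by
    rw [mul_pow, mul_pow, Real.sq_sqrt (by positivity), Real.sq_sqrt (by positivity), ← pow_mul,
      mul_comm k 2, pow_mul]
    exact_mod_cast choose_half_sq_mul_le_s11 k
  rw [le_div_iff₀ (by positivity)]
  exact (pow_le_pow_iff_left₀ (by positivity) (by positivity) two_ne_zero).1 hsq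

end Nat

variable {ι : Type*} [Fintype ι]

theorem card_filter_sum_mem_Ico_le (w : ι → ℝ) {r : ℝ} (hr : 0 ≤ r) (hw : ∀ i, r ≤ w i)
    (y : ℝ) :
    #{t : Finset ι | ∑ i ∈ t, w i ∈ Set.Ico y (y + r)} ≤
      (Fintype.card ι).choose (Fintype.card ι / 2) := by
  classical
  refine IsAntichain.sperner fun t ht u hu hne htu => ?_
  simp only [coe_filter, mem_univ, true_and, Set.mem_ofPred_eq, Set.mem_Ico] at ht hu
  obtain ⟨j, hj⟩ : (u \ t).Nonempty := sdiff_nonempty.2 fun hut => hne (htu.antisymm hut)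
  have hgap : r ≤ ∑ i ∈ u \ t, w i :=
    (hw j).trans (single_le_sum (fun i _ => hr.trans (hw i)) hj)
  have := sum_sdiff htu (f := w)
  linarith

theorem card_filter_sum_mem_Icc_le (w : ι → ℝ) {r : ℝ} (hr : 0 < r) (hw : ∀ i, r ≤ w i)
    (x L : ℝ) :
    #{t : Finset ι | ∑ i ∈ t, w i ∈ Set.Icc x (x + L)} ≤
      (⌊L / r⌋₊ + 1) * (Fintype.card ι).choose (Fintype.card ι / 2) := by
  classical
  have hcover : ({t : Finset ι | ∑ i ∈ t, w i ∈ Set.Icc x (x + L)} : Finset _) ⊆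
      (range (⌊L / r⌋₊ + 1)).biUnion
        fun j => {t : Finset ι | ∑ i ∈ t, w i ∈ Set.Ico (x + j * r) (x + j * r + r)} := by
    intro t ht
    simp only [mem_filter, mem_univ, true_and, Set.mem_Icc] at ht
    have hq : 0 ≤ (∑ i ∈ t, w i - x) / r := div_nonneg (by linarith) hr.le
    simp only [mem_biUnion, mem_range, mem_filter, mem_univ, true_and, Set.mem_Ico]
    refine ⟨⌊(∑ i ∈ t, w i - x) / r⌋₊, Nat.lt_succ_of_le (Nat.floor_le_floor ?_), ?_, ?_⟩
    · gcongr; linarith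
    · have := Nat.floor_le hq
      rw [le_div_iff₀ hr] at this
      linarith
    · have := Nat.lt_floor_add_one ((∑ i ∈ t, w i - x) / r)
      rw [div_lt_iff₀ hr] at this
      linarith
  calc _ ≤ _ := card_le_card hcover
    _ ≤ ∑ j ∈ range (⌊L / r⌋₊ + 1), (Fintype.card ι).choose (Fintype.card ι / 2) :=
        card_biUnion_le.trans (sum_le_sum fun j _ => card_filter_sum_mem_Ico_le w hr.le hw _)
    _ = _ := by rw [sum_const, card_range, smul_eq_mul]

def signedSum (a : ι → ℝ) (σ : ι → Bool) : ℝ := ∑ i, a i * if σ i then 1 else -1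

noncomputable def signAgreement (a : ι → ℝ) (σ : ι → Bool) : Finset ι :=
  {i | σ i = decide (0 ≤ a i)}

theorem signedSum_eq_two_mul_sum_sub (a : ι → ℝ) (σ : ι → Bool) :
    signedSum a σ = 2 * ∑ i ∈ signAgreement a σ, |a i| - ∑ i, |a i| := by
  rw [signAgreement, sum_filter, mul_sum, ← sum_sub_distrib]
  refine sum_congr rfl fun i _ => ?_
  rcases le_or_gt 0 (a i) with h | h <;> cases σ i <;>
    simp [h, abs_of_nonneg, abs_of_neg, not_le.2] <;> ring

theorem signAgreement_injective (a : ι → ℝ) : Function.Injective (signAgreement a) := by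
  intro σ τ h
  funext i
  have hi : σ i = decide (0 ≤ a i) ↔ τ i = decide (0 ≤ a i) := by
    simpa [signAgreement] using congrArg (i ∈ ·) h
  revert hi
  cases σ i <;> cases τ i <;> cases decide (0 ≤ a i) <;> simp

theorem card_filter_abs_signedSum_add_le [DecidableEq ι] (a : ι → ℝ) {r : ℝ} (hr : 0 < r)
    (ha : ∀ i, r ≤ |a i|) (c δ : ℝ) :
    #{σ : ι → Bool | |signedSum a σ + c| ≤ δ} ≤
      (⌊δ / r⌋₊ + 1) * (Fintype.card ι).choose (Fintype.card ι / 2) := by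
  refine (card_le_card_of_injOn (signAgreement a) (fun σ hσ => ?_)
    (signAgreement_injective a).injOn).trans
    (card_filter_sum_mem_Icc_le (fun i => |a i|) hr ha ((∑ i, |a i| - c - δ) / 2) δ)
  simp only [coe_filter, mem_univ, true_and, Set.mem_ofPred_eq,
    signedSum_eq_two_mul_sum_sub] at hσ ⊢
  rw [abs_le] at hσ
  constructor <;> linarith [hσ.1, hσ.2]

theorem signedSum_eq_add_subtype (a : ι → ℝ) (σ : ι → Bool) (p : ι → Prop) [DecidablePred p] :
    signedSum a σ = signedSum (fun i : {i // p i} => a i) (fun i => σ i) +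
      signedSum (fun i : {i // ¬ p i} => a i) (fun i => σ i) :=
  (Fintype.sum_subtype_add_sum_subtype p _).symm

theorem card_filter_abs_signedSum_add_le_of_subtype [DecidableEq ι] (a : ι → ℝ) {r : ℝ}
    (hr : 0 < r) (p : ι → Prop) [DecidablePred p] (hp : ∀ i, p i → r ≤ |a i|) (c δ : ℝ) :
    #{σ : ι → Bool | |signedSum a σ + c| ≤ δ} ≤
      (⌊δ / r⌋₊ + 1) * (Fintype.card {i // p i}).choose (Fintype.card {i // p i} / 2) *
        2 ^ Fintype.card {i // ¬ p i} := by
  have hfiber : ∀ g : {i // ¬ p i} → Bool,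
      #{σ ∈ ({σ : ι → Bool | |signedSum a σ + c| ≤ δ} : Finset _) | (fun i => σ i) = g} ≤
        (⌊δ / r⌋₊ + 1) * (Fintype.card {i // p i}).choose (Fintype.card {i // p i} / 2) := by
    intro g
    refine (card_le_card_of_injOn (fun σ (i : {i // p i}) => σ i) (fun σ hσ => ?_) ?_).trans
      (card_filter_abs_signedSum_add_le (fun i : {i // p i} => a i) hr (fun i => hp i i.2)
        (signedSum (fun i : {i // ¬ p i} => a i) g + c) δ)
    · simp only [coe_filter, mem_filter, mem_univ, true_and, Set.mem_ofPred_eq] at hσ ⊢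
      rw [← add_assoc, ← hσ.2, ← signedSum_eq_add_subtype]
      exact hσ.1
    · intro σ hσ τ hτ hστ
      simp only [coe_filter, mem_filter, mem_univ, true_and, Set.mem_ofPred_eq] at hσ hτ
      funext i
      by_cases hi : p i
      · exact congrFun hστ ⟨i, hi⟩
      · exact (congrFun hσ.2 ⟨i, hi⟩).trans (congrFun hτ.2 ⟨i, hi⟩).symm
  calc _ ≤ _ := card_le_mul_card_image_of_maps_to
        (fun σ _ => mem_univ (fun i : {i // ¬ p i} => σ i)) _ fun g _ => hfiber g
    _ = _ := by rw [card_univ, Fintype.card_fun, Fintype.card_bool]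

theorem card_filter_abs_signedSum_add_div_le [DecidableEq ι] (a : ι → ℝ) {r δ : ℝ} (hr : 0 < r)
    (hrδ : r ≤ δ) (p : ι → Prop) [DecidablePred p] (hp : ∀ i, p i → r ≤ |a i|)
    (hpos : 0 < Fintype.card {i // p i}) (c : ℝ) :
    (#{σ : ι → Bool | |signedSum a σ + c| ≤ δ} : ℝ) / 2 ^ Fintype.card ι ≤
      2 * √2 * (δ / r) / √(Fintype.card {i // p i}) := by
  set k := Fintype.card {i // p i}
  have hfloor : (⌊δ / r⌋₊ : ℝ) + 1 ≤ 2 * (δ / r) := by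
    have h1 : 1 ≤ δ / r := (one_le_div hr).2 hrδ
    have h2 : (⌊δ / r⌋₊ : ℝ) ≤ δ / r := Nat.floor_le (by linarith)
    linarith
  have hpow : (2 : ℝ) ^ Fintype.card {i // ¬ p i} * 2 ^ k = 2 ^ Fintype.card ι := by
    rw [← pow_add, Fintype.card_subtype_compl, Nat.sub_add_cancel (Fintype.card_subtype_le p)]
  have hδ : 0 < δ := hr.trans_le hrδ
  have hk : (0 : ℝ) < √k := Real.sqrt_pos.2 (by exact_mod_cast hpos)
  rw [div_le_iff₀ (by positivity)]
  calc (#{σ : ι → Bool | |signedSum a σ + c| ≤ δ} : ℝ)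
      ≤ (⌊δ / r⌋₊ + 1) * k.choose (k / 2) * 2 ^ Fintype.card {i // ¬ p i} := by
        exact_mod_cast card_filter_abs_signedSum_add_le_of_subtype a hr p hp c δ
    _ ≤ 2 * (δ / r) * (√2 * 2 ^ k / √k) * 2 ^ Fintype.card {i // ¬ p i} := by
        gcongr
        exact Nat.cast_choose_half_le hpos
    _ = 2 * √2 * (δ / r) / √k * 2 ^ Fintype.card ι := by
        rw [← hpow]; field_simp

/-- there is `C > 0` such that for independent uniform ±1 variables
`σ_1, …, σ_m`, reals `a_i`, and `0 < a_min ≤ δ`, if at least `n ≥ 1` indices satisfy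
`|a_i| ≥ a_min`, then for every `h`, `Pr(|∑ a_i σ_i + h| ≤ δ) ≤ C·(δ/a_min)/√n`
(probabilities as counting ratios over `{±1}^m`). -/
theorem stmt11 :
    ∃ C : ℝ, 0 < C ∧
      ∀ (m n : ℕ) (a : Fin m → ℝ) (amin δ : ℝ),
        1 ≤ n → 0 < amin → amin ≤ δ →
        n ≤ Set.ncard {i : Fin m | amin ≤ |a i|} →
        ∀ h : ℝ,
          (Set.ncard {σ : Fin m → Bool |
              |(∑ i, a i * (if σ i then 1 else -1)) + h| ≤ δ} : ℝ) / 2 ^ m ≤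
            C * (δ / amin) / Real.sqrt n := by
  refine ⟨2 * √2, by positivity, fun m n a amin δ hn hamin hδ hcard h => ?_⟩
  classical
  rw [Set.ncard_eq_toFinset_card', Set.toFinset_ofPred, ← Fintype.card_subtype] at hcard
  have hbound := card_filter_abs_signedSum_add_div_le a hamin hδ (fun i => amin ≤ |a i|)
    (fun _ hi => hi) (by omega) h
  rw [Fintype.card_fin] at hbound
  rw [Set.ncard_eq_toFinset_card', Set.toFinset_ofPred]
  have hδ0 : 0 < δ := hamin.trans_le hδ
  refine hbound.trans (div_le_div_of_nonneg_left (by positivity) (by positivity) ?_)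
  exact Real.sqrt_le_sqrt (by exact_mod_cast hcard)
end

section
/- For every real number x, |cos x| ≤ exp(−(1/2)·(inf over integers m of (x − π·m)^2)); equivalently, |cos x| ≤ exp(−dist(x, πℤ)^2/2). -/
/-!
Reducing `x` modulo `π` to `d = x - π·round (x/π)` with `|d| ≤ π/2` leaves `|cos x| = cos d`
and `d²` bounds the infimum from above, so it suffices that `cos t ≤ exp (-t²/2)` for
`|t| ≤ π/2`. This holds because `cos t · exp (t²/2)` has derivative
`(t cos t - sin t) · exp (t²/2) ≤ 0` on `[0, π/2]` (as `t ≤ tan t`) and equals `1` at `0`.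
-/

open Real Set

theorem abs_sub_mul_round_div_le {p : ℝ} (hp : 0 < p) (x : ℝ) :
    |x - p * round (x / p)| ≤ p / 2 := by
  have h := abs_sub_round (x / p)
  have hx : x - p * round (x / p) = p * (x / p - round (x / p)) := by field_simp
  rw [hx, abs_mul, abs_of_pos hp]
  nlinarith

namespace Real

theorem mul_cos_le_sin {t : ℝ} (h0 : 0 ≤ t) (h : t ≤ π / 2) : t * cos t ≤ sin t := by
  rcases h.lt_or_eq with hlt | rfl
  · have hcos : 0 < cos t := cos_pos_of_mem_Ioo ⟨by linarith [pi_pos], hlt⟩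
    simpa [tan_eq_sin_div_cos, le_div_iff₀ hcos] using le_tan h0 hlt
  · simp

theorem hasDerivAt_cos_mul_exp_sq_div_two (t : ℝ) :
    HasDerivAt (fun t => cos t * exp (t ^ 2 / 2)) ((t * cos t - sin t) * exp (t ^ 2 / 2)) t :=
  ((hasDerivAt_cos t).mul ((hasDerivAt_pow 2 t).div_const 2).exp).congr_deriv (by ring)

theorem antitoneOn_cos_mul_exp_sq_div_two :
    AntitoneOn (fun t => cos t * exp (t ^ 2 / 2)) (Icc 0 (π / 2)) := by
  refine antitoneOn_of_hasDerivWithinAt_nonpos (convex_Icc _ _) (by fun_prop)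
    (fun t _ => (hasDerivAt_cos_mul_exp_sq_div_two t).hasDerivWithinAt) fun t ht => ?_
  rw [interior_Icc] at ht
  exact mul_nonpos_of_nonpos_of_nonneg (sub_nonpos.2 (mul_cos_le_sin ht.1.le ht.2.le))
    (exp_pos _).le

theorem cos_le_exp_neg_sq_div_two {t : ℝ} (ht : |t| ≤ π / 2) : cos t ≤ exp (-t ^ 2 / 2) := by
  have h := antitoneOn_cos_mul_exp_sq_div_two ⟨le_rfl, by linarith [pi_pos]⟩
    ⟨abs_nonneg t, ht⟩ (abs_nonneg t)
  simp only [cos_abs, sq_abs, cos_zero, ne_eq, OfNat.ofNat_ne_zero, not_false_eq_true,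
    zero_pow, zero_div, exp_zero, mul_one] at h
  rwa [neg_div, exp_neg, ← one_div, le_div_iff₀ (exp_pos _)]

end Real

/-- for every real `x`, `|cos x| ≤ exp(-(1/2)·inf_{m ∈ ℤ} (x - π m)^2)`. -/
theorem stmt12 (x : ℝ) :
    |Real.cos x| ≤ Real.exp (-(⨅ m : ℤ, (x - Real.pi * m) ^ 2) / 2) := by
  set n := round (x / π)
  have hd : |x - π * n| ≤ π / 2 := abs_sub_mul_round_div_le pi_pos x
  have hcos : |cos x| = cos (x - π * n) := by
    rw [← abs_of_nonneg (cos_nonneg_of_neg_pi_div_two_le_of_le (abs_le.1 hd).1 (abs_le.1 hd).2),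
      mul_comm, cos_sub_int_mul_pi, abs_mul, abs_neg_one_zpow, one_mul]
  have hinf : ⨅ m : ℤ, (x - π * m) ^ 2 ≤ (x - π * n) ^ 2 :=
    ciInf_le ⟨0, forall_mem_range.2 fun _ => sq_nonneg _⟩ n
  calc |cos x| = cos (x - π * n) := hcos
    _ ≤ exp (-(x - π * n) ^ 2 / 2) := cos_le_exp_neg_sq_div_two hd
    _ ≤ _ := exp_le_exp.2 (by linarith)
end

section
/- There exists a constant C > 0 such that the following holds. Let a be a real number with |a| ≥ 1, let δ ≥ 1, let t > 0, and let K be a Gaussian random variable with mean 0 and variance δ^{−2}. Then Pr(|cos(a·K)| ≥ e^{−t}) ≤ C·δ·√t. -/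
/-!
With `w = arccos (e^{-t})`, the event `e^{-t} ≤ |cos x|` confines `x` to `⋃ₙ [nπ - w, nπ + w]`,
and `w ≤ π √t`. Rescaling, `a K` is a centred Gaussian whose density is at most `δ`, so the
central interval has mass at most `2 w δ`. Any other interval is farther from the origin than the
gap of length `π - 2w` beside it on the origin's side; the density decreasing in `|x|`, its mass
is at most `2w / (π - 2w)` times the mass of that gap, and the gaps are disjoint, so the two
tails together contribute `O(w)`.
-/

open MeasureTheory ProbabilityTheory Real Set
open scoped ENNReal NNReal Pointwise

section AntitoneDensity

variable {f : ℝ → ℝ≥0∞} {M : ℝ≥0∞}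

lemma withDensity_Icc_le_mul {p q : ℝ} (h : ∀ x ∈ Icc p q, f x ≤ M) :
    volume.withDensity f (Icc p q) ≤ M * ENNReal.ofReal (q - p) := by
  rw [withDensity_apply _ measurableSet_Icc, ← Real.volume_Icc, ← setLIntegral_const]
  exact setLIntegral_mono' measurableSet_Icc h

lemma mul_le_withDensity_Icc {p q : ℝ} (h : ∀ x ∈ Icc p q, M ≤ f x) :
    M * ENNReal.ofReal (q - p) ≤ volume.withDensity f (Icc p q) := by
  rw [withDensity_apply _ measurableSet_Icc, ← Real.volume_Icc, ← setLIntegral_const]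
  exact setLIntegral_mono' measurableSet_Icc h

lemma withDensity_Icc_le_mul_withDensity_Icc (hf : AntitoneOn f (Ici 0)) {u v y z : ℝ}
    (hu : 0 ≤ u) (huv : u < v) (hvy : v ≤ y) :
    volume.withDensity f (Icc y z) ≤
      ENNReal.ofReal ((z - y) / (v - u)) * volume.withDensity f (Icc u v) := by
  have hv : v ∈ Ici 0 := le_trans hu huv.le
  calc volume.withDensity f (Icc y z) ≤ f v * ENNReal.ofReal (z - y) :=
        withDensity_Icc_le_mul fun x hx ↦ hf hv (hv.trans (hvy.trans hx.1)) (hvy.trans hx.1)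
    _ = ENNReal.ofReal ((z - y) / (v - u)) * (f v * ENNReal.ofReal (v - u)) := by
        rw [mul_left_comm, ← ENNReal.ofReal_mul' (sub_nonneg.2 huv.le),
          div_mul_cancel₀ _ (sub_ne_zero.2 huv.ne')]
    _ ≤ ENNReal.ofReal ((z - y) / (v - u)) * volume.withDensity f (Icc u v) := by
        gcongr
        exact mul_le_withDensity_Icc fun x hx ↦ hf (hu.trans hx.1) hv hx.2

/-- Each interval `[(n+1)P - w, (n+1)P + w]` is charged to the gap `[nP + w, (n+1)P - w]` on
its left. -/
lemma withDensity_iUnion_Icc_le (hf : AntitoneOn f (Ici 0)) {P w : ℝ} (hw : 0 < w)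
    (hwP : 2 * w < P) :
    volume.withDensity f (⋃ n : ℕ, Icc ((n + 1) * P - w) ((n + 1) * P + w)) ≤
      ENNReal.ofReal (2 * w / (P - 2 * w)) * volume.withDensity f univ := by
  set μ := volume.withDensity f
  have hP : 0 < P := by linarith
  have hgaps :
      Pairwise (Function.onFun Disjoint fun n : ℕ ↦ Icc (n * P + w) ((n + 1) * P - w)) := by
    refine (pairwise_disjoint_on _).2 fun m n hmn ↦ Set.disjoint_left.2 fun x hxm hxn ↦ ?_
    have : ((m : ℝ) + 1) * P ≤ n * P := by gcongr; exact_mod_cast hmn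
    linarith [hxm.2, hxn.1]
  calc μ (⋃ n : ℕ, Icc ((n + 1) * P - w) ((n + 1) * P + w))
      ≤ ∑' n : ℕ, μ (Icc ((n + 1) * P - w) ((n + 1) * P + w)) := measure_iUnion_le _
    _ ≤ ∑' n : ℕ,
          ENNReal.ofReal (2 * w / (P - 2 * w)) * μ (Icc (n * P + w) ((n + 1) * P - w)) := by
        refine ENNReal.tsum_le_tsum fun n ↦ ?_
        have := withDensity_Icc_le_mul_withDensity_Icc hf (u := n * P + w)
          (v := (n + 1) * P - w) (y := (n + 1) * P - w) (z := (n + 1) * P + w)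
          (by positivity) (by linarith) le_rfl
        convert this using 4 <;> ring
    _ = ENNReal.ofReal (2 * w / (P - 2 * w)) *
          μ (⋃ n : ℕ, Icc (n * P + w) ((n + 1) * P - w)) := by
        rw [ENNReal.tsum_mul_left, measure_iUnion hgaps fun _ ↦ measurableSet_Icc]
    _ ≤ ENNReal.ofReal (2 * w / (P - 2 * w)) * μ univ := by gcongr; exact subset_univ _

end AntitoneDensity

lemma gaussianPDFReal_le_gaussianPDFReal_mean (μ : ℝ) (v : ℝ≥0) (x : ℝ) :
    gaussianPDFReal μ v x ≤ gaussianPDFReal μ v μ := by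
  simp only [gaussianPDFReal, sub_self]
  refine mul_le_mul_of_nonneg_left (exp_le_exp.2 ?_) (by positivity)
  simp only [ne_eq, OfNat.ofNat_ne_zero, not_false_eq_true, zero_pow, zero_div, neg_zero,
    neg_div, neg_nonpos]
  positivity

lemma gaussianPDFReal_mean (μ : ℝ) (v : ℝ≥0) : gaussianPDFReal μ v μ = (√(2 * π * v))⁻¹ := by
  simp [gaussianPDFReal]

lemma antitoneOn_gaussianPDF (μ : ℝ) (v : ℝ≥0) : AntitoneOn (gaussianPDF μ v) (Ici μ) := by
  intro x hx y _ hxy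
  simp only [gaussianPDF, gaussianPDFReal]
  gcongr
  exact sub_nonneg.2 hx

lemma gaussianReal_iUnion_Icc_int_le {v : ℝ≥0} (hv : v ≠ 0) {P w : ℝ} (hw : 0 < w)
    (hwP : 2 * w < P) :
    gaussianReal 0 v (⋃ n : ℤ, Icc (n * P - w) (n * P + w)) ≤
      gaussianPDF 0 v 0 * ENNReal.ofReal (2 * w) + 2 * ENNReal.ofReal (2 * w / (P - 2 * w)) := by
  set U := ⋃ n : ℕ, Icc ((n + 1) * P - w) ((n + 1) * P + w)
  have hU : MeasurableSet U := MeasurableSet.iUnion fun _ ↦ measurableSet_Icc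
  have hcover : ⋃ n : ℤ, Icc (n * P - w) (n * P + w) ⊆ Icc (-w) w ∪ U ∪ -U := by
    refine iUnion_subset fun n x hx ↦ ?_
    obtain ⟨k, rfl | rfl⟩ := Int.eq_nat_or_neg n
    · rcases k with _ | k
      · left; left; simpa [neg_le] using hx
      · left; right; exact mem_iUnion.2 ⟨k, by simpa using hx⟩
    · rcases k with _ | k
      · left; left; simpa [neg_le] using hx
      · right
        refine mem_iUnion.2 ⟨k, ?_⟩
        push_cast at hx ⊢
        constructor <;> linarith [hx.1, hx.2]
  have htail : gaussianReal 0 v U ≤ ENNReal.ofReal (2 * w / (P - 2 * w)) := by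
    have := withDensity_iUnion_Icc_le (antitoneOn_gaussianPDF 0 v) hw hwP
    rwa [← gaussianReal_of_var_ne_zero 0 hv, measure_univ, mul_one] at this
  have hneg : gaussianReal 0 v (-U) = gaussianReal 0 v U := by
    rw [← Set.neg_preimage, ← Measure.map_apply measurable_neg hU, gaussianReal_map_neg, neg_zero]
  have hcenter : gaussianReal 0 v (Icc (-w) w) ≤ gaussianPDF 0 v 0 * ENNReal.ofReal (2 * w) := by
    have := withDensity_Icc_le_mul (f := gaussianPDF 0 v) (p := -w) (q := w) fun x _ ↦
      ENNReal.ofReal_le_ofReal (gaussianPDFReal_le_gaussianPDFReal_mean 0 v x)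
    rwa [sub_neg_eq_add, ← two_mul, ← gaussianReal_of_var_ne_zero 0 hv] at this
  calc gaussianReal 0 v (⋃ n : ℤ, Icc (n * P - w) (n * P + w))
      ≤ gaussianReal 0 v (Icc (-w) w) + gaussianReal 0 v U + gaussianReal 0 v (-U) :=
        (measure_mono hcover).trans <| (measure_union_le _ _).trans <| by
          gcongr; exact measure_union_le _ _
    _ ≤ _ := by rw [hneg, add_assoc, ← two_mul (gaussianReal 0 v U)]; gcongr

lemma setOf_le_abs_cos_subset_iUnion_Icc (c : ℝ) :
    {x : ℝ | c ≤ |cos x|} ⊆ ⋃ n : ℤ, Icc (n * π - arccos c) (n * π + arccos c) := by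
  intro x hx
  set n := round (x / π)
  have hy : |x - n * π| ≤ π / 2 := by
    have h := abs_sub_round (x / π)
    rw [show x - n * π = (x / π - n) * π by field_simp, abs_mul, abs_of_pos pi_pos]
    nlinarith [pi_pos]
  have hcos : cos |x - n * π| = |cos x| := by
    rw [cos_abs, ← abs_of_nonneg (cos_nonneg_of_mem_Icc (abs_le.1 hy)), cos_sub_int_mul_pi,
      abs_mul, abs_neg_one_zpow, one_mul]
  have hle : |x - n * π| ≤ arccos c := by
    rw [← arccos_cos (abs_nonneg _) (by linarith [pi_pos]), hcos]
    exact arccos_le_arccos hx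
  exact mem_iUnion.2 ⟨n, by constructor <;> linarith [(abs_le.1 hle).1, (abs_le.1 hle).2]⟩

lemma arccos_exp_neg_le {t : ℝ} (ht : 0 ≤ t) : arccos (exp (-t)) ≤ π * √t := by
  set w := arccos (exp (-t))
  have hcos : cos w = exp (-t) :=
    cos_arccos (by linarith [exp_pos (-t)]) (exp_le_one_iff.2 (by linarith))
  have hw : |w| ≤ π := abs_le.2 ⟨by linarith [arccos_nonneg (exp (-t)), pi_pos], arccos_le_pi _⟩
  have h1 := cos_le_one_sub_mul_cos_sq hw
  have h2 := add_one_le_exp (-t)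
  have h3 : 2 * w ^ 2 ≤ π ^ 2 * t := by
    have : 2 / π ^ 2 * w ^ 2 ≤ t := by linarith
    rw [div_mul_eq_mul_div, div_le_iff₀ (by positivity)] at this
    linarith
  by_contra! h
  nlinarith [mul_lt_mul'' h h (by positivity) (by positivity), sq_sqrt ht, sq_nonneg w]

lemma toReal_gaussianReal_setOf_le_abs_cos_le {v : ℝ≥0} (hv : v ≠ 0) {c : ℝ} (hc₀ : 0 < c)
    (hc₁ : c < 1) :
    (gaussianReal 0 v {x | c ≤ |cos x|}).toReal ≤
      (√(2 * π * v))⁻¹ * (2 * arccos c) + 2 * (2 * arccos c / (π - 2 * arccos c)) := by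
  have hw : 0 < arccos c := arccos_pos.2 hc₁
  have hwπ : 2 * arccos c < π := by linarith [arccos_lt_pi_div_two.2 hc₀]
  have hgap : 0 ≤ 2 * arccos c / (π - 2 * arccos c) := div_nonneg (by positivity) (by linarith)
  refine ENNReal.toReal_le_of_le_ofReal (by positivity) ?_
  calc gaussianReal 0 v {x | c ≤ |cos x|}
      ≤ gaussianReal 0 v (⋃ n : ℤ, Icc (n * π - arccos c) (n * π + arccos c)) :=
        measure_mono (setOf_le_abs_cos_subset_iUnion_Icc c)
    _ ≤ gaussianPDF 0 v 0 * ENNReal.ofReal (2 * arccos c) +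
          2 * ENNReal.ofReal (2 * arccos c / (π - 2 * arccos c)) :=
        gaussianReal_iUnion_Icc_int_le hv hw hwπ
    _ = _ := by
        rw [gaussianPDF, gaussianPDFReal_mean, ← ENNReal.ofReal_mul (by positivity),
          ← ENNReal.ofReal_ofNat 2, ← ENNReal.ofReal_mul zero_le_two,
          ← ENNReal.ofReal_add (by positivity) (by positivity)]

lemma gaussianReal_setOf_le_abs_cos_mul (v : ℝ≥0) (a c : ℝ) :
    gaussianReal 0 v {k | c ≤ |cos (a * k)|} =
      gaussianReal 0 (.mk (a ^ 2) (sq_nonneg a) * v) {x | c ≤ |cos x|} := by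
  have hmap := gaussianReal_map_const_mul (μ := 0) (v := v) a
  rw [mul_zero] at hmap
  rw [← hmap, Measure.map_apply (measurable_const_mul a)
    (measurableSet_le measurable_const (by fun_prop))]
  rfl

lemma toReal_gaussianReal_setOf_exp_neg_le_abs_cos_le {v : ℝ≥0} (hv : v ≠ 0) {δ t : ℝ}
    (hpeak : (√(2 * π * v))⁻¹ ≤ δ) (hδ : 1 ≤ δ) (ht₀ : 0 < t) (ht : t < 1 / 100) :
    (gaussianReal 0 v {x | exp (-t) ≤ |cos x|}).toReal ≤ 12 * δ * √t := by
  refine (toReal_gaussianReal_setOf_le_abs_cos_le hv (exp_pos _)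
    (exp_lt_one_iff.2 (neg_neg_of_pos ht₀))).trans ?_
  set w := arccos (exp (-t))
  have hw : w ≤ π * √t := arccos_exp_neg_le ht₀.le
  have hw₀ : 0 ≤ w := arccos_nonneg _
  have hst : √t ≤ 1 / 10 := sqrt_le_iff.2 ⟨by norm_num, by linarith⟩
  have hw₁ : w ≤ π / 10 := by nlinarith [pi_pos]
  have hgap : 2 * w / (π - 2 * w) ≤ 5 / 2 * √t := by
    rw [div_le_iff₀ (by linarith [pi_pos])]
    nlinarith [mul_nonneg (sqrt_nonneg t) (by linarith : 0 ≤ π - 2 * w - 4 * π / 5)]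
  calc (√(2 * π * v))⁻¹ * (2 * w) + 2 * (2 * w / (π - 2 * w))
      ≤ δ * (2 * (π * √t)) + 2 * (5 / 2 * √t) := by gcongr
    _ ≤ 12 * δ * √t := by
      nlinarith [mul_le_mul_of_nonneg_right pi_lt_d2.le (by positivity : 0 ≤ δ * √t),
        mul_nonneg (sub_nonneg.2 hδ) (sqrt_nonneg t)]

/-- there is `C > 0` such that for every real `a` with `|a| ≥ 1`, every
`δ ≥ 1` and every `t > 0`, a centered Gaussian `K` of variance `δ⁻²` satisfies
`Pr(|cos(a·K)| ≥ e^{-t}) ≤ C·δ·√t`. -/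
theorem stmt13 :
    ∃ C : ℝ, 0 < C ∧
      ∀ a δ t : ℝ, 1 ≤ |a| → 1 ≤ δ → 0 < t →
        ((gaussianReal 0 ((δ⁻¹ ^ 2).toNNReal))
            {k : ℝ | Real.exp (-t) ≤ |Real.cos (a * k)|}).toReal ≤
          C * δ * Real.sqrt t := by
  refine ⟨12, by norm_num, fun a δ t ha hδ ht => ?_⟩
  rcases le_or_gt (1 / 100) t with ht_large | ht_small
  · have : 1 / 10 ≤ √t := (le_sqrt (by norm_num) ht.le).2 (by linarith)
    calc _ ≤ 1 := ENNReal.toReal_le_of_le_ofReal zero_le_one (by simpa using prob_le_one)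
      _ ≤ 12 * δ * √t := by nlinarith
  rw [gaussianReal_setOf_le_abs_cos_mul]
  set v : ℝ≥0 := .mk (a ^ 2) (sq_nonneg a) * (δ⁻¹ ^ 2).toNNReal with hv_def
  have hv : (v : ℝ) = a ^ 2 * δ⁻¹ ^ 2 := by
    rw [hv_def, NNReal.coe_mul, Real.coe_toNNReal _ (by positivity)]; rfl
  have ha₂ : 1 ≤ a ^ 2 := by nlinarith [sq_abs a]
  have hv₀ : v ≠ 0 := by
    rw [← NNReal.coe_ne_zero, hv]
    exact (mul_pos (by linarith) (by positivity)).ne'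
  have hpeak : (√(2 * π * v))⁻¹ ≤ δ := by
    refine inv_le_of_inv_le₀ (by linarith) ((le_sqrt (by positivity) (by positivity)).2 ?_)
    rw [hv]
    nlinarith [two_le_pi, sq_nonneg δ⁻¹]
  exact toReal_gaussianReal_setOf_exp_neg_le_abs_cos_le hv₀ hpeak hδ ht ht_small
end

section
/- There exist constants ε₀ > 0 and c > 0 such that the following holds. Let an Ising instance on N variables have a graph of maximum degree at most d and satisfy ∑_j |J i j| ≤ J_max for every variable i. Let T₁ and T₂ be disjoint sets of variables and let V₀ be the set of variables outside T₁ ∪ T₂. Let 0 < ε ≤ ε₀ with |V₀| sufficiently large depending on ε, write D = ⌊(1/99)·ε^{−1}⌋, and suppose at least (98/99)·|V₀| of the variables in V₀ have degree at least D. Then there exists T ⊆ V₀ with |T| ≥ c·ε·|V₀| such that: (1) every i ∈ T has at most 99·ε·d neighbors inside T; (2) every i ∈ T has at least D variables j ∉ T with J i j ≠ 0 and |J i j| ≥ max_{k ∈ T} |J i k|; (3) to each i ∈ T one can assign a set E_i of exactly D variables j ∉ T with J i j ≠ 0 and |J i j| ≥ max_{k ∈ T} |J i k| (the 'strong edges'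 of i) in such a way that for every i ∈ T, the sum over neighbors j ∉ T of i of the number of indices k ∈ T with j ∈ E_k is at most 99·d; and (4) every i ∈ T satisfies ∑_{j ∈ T₁ ∪ T₂} |J i j| ≤ 99·J_max·(|T₁| + |T₂|)/|V₀|. -/
open Finset

open scoped Classical

/-!
Sample the vertices of `s`, the high-degree vertices of `V₀` interacting weakly with `T₁ ∪ T₂`,
independently with probability `ε`, and delete a sampled vertex if it has more than `99 ε d`
sampled neighbours, if one of its `D` strongest edges leads into the sample, or if the strong
edges of the other sampled vertices meet its neighbourhood more than `98 d` times. Charging every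
deletion, Markov-style, to pairs of sampled vertices bounds the expected number of deletions by
`3 ε |s| / 99`, so some sample keeps at least `(96/99) ε |s|` vertices, and the survivors satisfy
(1)–(3). Since the row sums `∑_{j ∈ T₁ ∪ T₂} |J i j|` add up to at most `J_max (|T₁| + |T₂|)`,
Markov's inequality shows that all but `|V₀| / 99` vertices satisfy (4), so `|s| ≥ (97/99) |V₀|`.
-/
theorem Finset.exists_subset_card_eq_forall_sdiff_le {α β : Type*} [DecidableEq α]
    [AddCommGroup β] [LinearOrder β] [IsOrderedAddMonoid β]
    (s : Finset α) (f : α → β) {D : ℕ} (hD : D ≤ #s) :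
    ∃ t ⊆ s, #t = D ∧ ∀ j ∈ t, ∀ k ∈ s \ t, f k ≤ f j := by
  obtain ⟨t, ht, hmax⟩ :=
    (s.powersetCard D).exists_max_image (fun t => ∑ x ∈ t, f x) (powersetCard_nonempty.2 hD)
  obtain ⟨hts, htD⟩ := mem_powersetCard.1 ht
  refine ⟨t, hts, htD, fun j hj k hk => ?_⟩
  obtain ⟨hks, hkt⟩ := mem_sdiff.1 hk
  by_contra! hlt
  have hk : k ∉ t.erase j := fun h => hkt (mem_of_mem_erase h)
  have hswap : insert k (t.erase j) ∈ s.powersetCard D := mem_powersetCard.2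
    ⟨insert_subset hks ((erase_subset j t).trans hts),
      by rw [card_insert_of_notMem hk, card_erase_of_mem hj]; have := card_pos.2 ⟨j, hj⟩; omega⟩
  have := hmax _ hswap
  rw [sum_insert hk, ← add_sum_erase t f hj] at this
  exact (add_lt_add_left hlt _).not_ge this

section BiasedSubsets

variable {α R : Type*} [DecidableEq α]

/-- The probability of `A` when each element of `s` is put in `A` independently with
probability `p`. -/
def biasedWeight [CommRing R] (p : R) (s A : Finset α) : R := p ^ #A * (1 - p) ^ (#s - #A)

theorem sum_biasedWeight_of_subset [CommRing R] (p : R) {s t : Finset α} (hts : t ⊆ s) :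
    ∑ A ∈ s.powerset with t ⊆ A, biasedWeight p s A = p ^ #t := by
  have hprod : ∏ i ∈ s, (p + if i ∈ t then 0 else 1 - p) = p ^ #t := by
    calc ∏ i ∈ s, (p + if i ∈ t then 0 else 1 - p) = ∏ i ∈ s, if i ∈ t then p else 1 :=
          prod_congr rfl fun i _ => by split_ifs <;> ring
      _ = p ^ #t := by rw [prod_ite_mem, prod_const, inter_eq_right.2 hts]
  rw [sum_filter, ← hprod, prod_add (fun _ => p) (fun i => if i ∈ t then 0 else 1 - p)]
  refine sum_congr rfl fun A hA => ?_
  rw [prod_const]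
  split_ifs with htA
  · rw [biasedWeight, prod_congr rfl fun i hi => if_neg fun hit => (mem_sdiff.1 hi).2 (htA hit),
      prod_const, card_sdiff_of_subset (mem_powerset.1 hA)]
  · obtain ⟨x, hxt, hxA⟩ := not_subset.1 htA
    rw [prod_eq_zero (mem_sdiff.2 ⟨hts hxt, hxA⟩) (by simp [hxt]), mul_zero]

theorem sum_one_sub_sum_erase_eq {s A : Finset α} (hA : A ⊆ s) (c : α → α → ℝ) :
    ∑ i ∈ A, (1 - ∑ j ∈ A.erase i, c i j) =
      ∑ i ∈ s, (if {i} ⊆ A then 1 else 0) -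
        ∑ i ∈ s, ∑ j ∈ s.erase i, (if {i, j} ⊆ A then 1 else 0) * c i j := by
  calc _ = ∑ i ∈ s, if i ∈ A then 1 - ∑ j ∈ s.erase i, (if j ∈ A then c i j else 0) else 0 := by
        simp only [sum_ite_mem, erase_inter, inter_eq_right.2 hA]
    _ = _ := by
        rw [← sum_sub_distrib]
        refine sum_congr rfl fun i _ => ?_
        by_cases hi : i ∈ A <;> simp [hi, insert_subset_iff]

/-- First moment method: the left side is the mean of the right side under `biasedWeight p s`. -/
theorem exists_subset_le_sum_one_sub_sum (s : Finset α) (c : α → α → ℝ) {p : ℝ}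
    (hp₀ : 0 < p) (hp₁ : p < 1) :
    ∃ A ⊆ s, p * #s - p ^ 2 * ∑ i ∈ s, ∑ j ∈ s.erase i, c i j ≤
      ∑ i ∈ A, (1 - ∑ j ∈ A.erase i, c i j) := by
  set w := biasedWeight p s
  have hmarg : ∀ t ⊆ s, ∑ A ∈ s.powerset, w A * (if t ⊆ A then 1 else 0) = p ^ #t :=
    fun t ht => by
      simp only [mul_ite, mul_one, mul_zero]
      rw [← sum_filter]; exact sum_biasedWeight_of_subset p ht
  have hw : ∑ A ∈ s.powerset, w A = 1 := by simpa using hmarg ∅ (empty_subset s)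
  have hexp : ∑ A ∈ s.powerset, w A * ∑ i ∈ A, (1 - ∑ j ∈ A.erase i, c i j) =
      p * #s - p ^ 2 * ∑ i ∈ s, ∑ j ∈ s.erase i, c i j := by
    rw [sum_congr rfl fun A hA => by rw [sum_one_sub_sum_erase_eq (mem_powerset.1 hA) c]]
    simp only [_root_.mul_sub, mul_sum, sum_sub_distrib, ← mul_assoc]
    congr 1
    · rw [sum_comm, sum_congr rfl fun i hi => hmarg {i} (singleton_subset_iff.2 hi)]
      simp [mul_comm]
    · rw [sum_comm]
      refine sum_congr rfl fun i hi => ?_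
      rw [sum_comm]
      refine sum_congr rfl fun j hj => ?_
      rw [← sum_mul, hmarg {i, j} (insert_subset hi (singleton_subset_iff.2 (mem_of_mem_erase hj))),
        card_pair (ne_of_mem_erase hj).symm]
  obtain ⟨A, hA, hle⟩ := exists_le_of_sum_le (powerset_nonempty s)
    (f := fun A => w A * (p * #s - p ^ 2 * ∑ i ∈ s, ∑ j ∈ s.erase i, c i j))
    (g := fun A => w A * ∑ i ∈ A, (1 - ∑ j ∈ A.erase i, c i j))
    (by rw [← sum_mul, hw, one_mul, hexp])
  exact ⟨A, mem_powerset.1 hA, le_of_mul_le_mul_left hle (by unfold w biasedWeight; positivity)⟩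

end BiasedSubsets

theorem Finset.card_filter_div_lt_le {α : Type*} (s : Finset α) (f : α → ℝ)
    (hf : ∀ i ∈ s, 0 ≤ f i) {M K : ℝ} (hK : 0 < K) (hM : ∑ i ∈ s, f i ≤ M) :
    (#{i ∈ s | M / K < f i} : ℝ) ≤ K := by
  by_contra! hKB
  have hne : {i ∈ s | M / K < f i}.Nonempty := card_pos.1 (by exact_mod_cast hK.trans hKB)
  have hlt := sum_lt_sum_of_nonempty hne fun i hi => (mem_filter.1 hi).2
  have hle : ∑ i ∈ s with M / K < f i, f i ≤ M :=
    (sum_le_sum_of_subset_of_nonneg (filter_subset _ s) fun i hi _ => hf i hi).trans hM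
  have hM₀ : 0 ≤ M := (sum_nonneg hf).trans hM
  have hMK : M ≤ #{i ∈ s | M / K < f i} * (M / K) := by
    calc M = K * (M / K) := by field_simp
      _ ≤ _ := mul_le_mul_of_nonneg_right hKB.le (by positivity)
  rw [sum_const, nsmul_eq_mul] at hlt
  linarith

theorem Finset.sum_one_sub_le_card_filter {α : Type*} (A : Finset α) (P : α → Prop)
    [DecidablePred P] (f : α → ℝ) (hf : ∀ i ∈ A, 0 ≤ f i) (hP : ∀ i ∈ A, ¬P i → 1 ≤ f i) :
    ∑ i ∈ A, (1 - f i) ≤ #{i ∈ A | P i} := by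
  rw [card_filter, Nat.cast_sum]
  refine sum_le_sum fun i hi => ?_
  split_ifs with h
  · simp [hf i hi]
  · simp [hP i hi h]

namespace Ising

variable {N : ℕ} (J : Fin N → Fin N → ℝ)

noncomputable def nbrs (i : Fin N) : Finset (Fin N) := {j | j ≠ i ∧ J i j ≠ 0}

variable {J}

theorem mem_nbrs {i j : Fin N} : j ∈ nbrs J i ↔ j ≠ i ∧ J i j ≠ 0 := by simp [nbrs]

theorem card_nbrs (i : Fin N) : #(nbrs J i) = degreeJ J i := by
  rw [degreeJ, ← Set.ncard_coe_finset]
  congr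
  ext
  simp [nbrs]

theorem mem_nbrs_comm (hsym : ∀ i j, J i j = J j i) {i j : Fin N} :
    j ∈ nbrs J i ↔ i ∈ nbrs J j := by
  simp [mem_nbrs, hsym i j, ne_comm]

theorem sum_card_inter_nbrs_le (hsym : ∀ i j, J i j = J j i) {d : ℕ}
    (hdeg : ∀ i, degreeJ J i ≤ d) (F : Finset (Fin N)) :
    ∑ i, #(F ∩ nbrs J i) ≤ #F * d := by
  calc ∑ i, #(F ∩ nbrs J i) = ∑ x ∈ F, #{i | x ∈ nbrs J i} := by
        simp only [← filter_mem_eq_inter]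
        exact sum_card_bipartiteAbove_eq_sum_card_bipartiteBelow (r := fun i x => x ∈ nbrs J i)
    _ = ∑ x ∈ F, degreeJ J x := by
        refine sum_congr rfl fun x _ => ?_
        rw [← card_nbrs]
        congr
        ext
        simp [mem_nbrs_comm hsym, mem_nbrs]
    _ ≤ #F * d := sum_le_card_nsmul F _ d fun x _ => hdeg x

theorem sum_sum_abs_le (hsym : ∀ i j, J i j = J j i) {Jmax : ℝ}
    (hJmax : ∀ i, ∑ j, |J i j| ≤ Jmax) (S U : Finset (Fin N)) :
    ∑ i ∈ S, ∑ j ∈ U, |J i j| ≤ Jmax * #U := by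
  calc ∑ i ∈ S, ∑ j ∈ U, |J i j| ≤ ∑ i, ∑ j ∈ U, |J i j| :=
        sum_le_sum_of_subset_of_nonneg (subset_univ S) fun i _ _ =>
          sum_nonneg fun j _ => abs_nonneg _
    _ = ∑ j ∈ U, ∑ i, |J j i| := by rw [sum_comm]; simp only [hsym]
    _ ≤ ∑ j ∈ U, Jmax := sum_le_sum fun j _ => hJmax j
    _ = Jmax * #U := by rw [sum_const, nsmul_eq_mul, mul_comm]

theorem card_sub_le_card_filter_sum_abs_le (hsym : ∀ i j, J i j = J j i) {Jmax : ℝ}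
    (hJmax : ∀ i, ∑ j, |J i j| ≤ Jmax) {T₁ T₂ : Finset (Fin N)} (hdisj : Disjoint T₁ T₂)
    (S : Finset (Fin N)) {n : ℝ} (hn : 0 < n) :
    (#S : ℝ) - n / 99 ≤ #{i ∈ S | ∑ j ∈ T₁ ∪ T₂, |J i j| ≤ 99 * Jmax * ((#T₁ : ℝ) + #T₂) / n} := by
  set τ := 99 * Jmax * ((#T₁ : ℝ) + #T₂) / n with hτ_def
  have hτ : Jmax * #(T₁ ∪ T₂) / (n / 99) = τ := by
    rw [hτ_def, card_union_of_disjoint hdisj]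
    push_cast
    field_simp
  have hbad := S.card_filter_div_lt_le _ (fun i _ => sum_nonneg fun _ _ => abs_nonneg _)
    (K := n / 99) (by positivity) (sum_sum_abs_le hsym hJmax S (T₁ ∪ T₂))
  rw [hτ] at hbad
  have hsplit := card_filter_add_card_filter_not (s := S) fun i => ∑ j ∈ T₁ ∪ T₂, |J i j| ≤ τ
  simp only [not_le] at hsplit
  have := congrArg (Nat.cast : ℕ → ℝ) hsplit
  push_cast at this
  linarith

theorem exists_strongEdges (D : ℕ) : ∃ E : Fin N → Finset (Fin N), ∀ i, D ≤ degreeJ J i →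
    E i ⊆ nbrs J i ∧ #(E i) = D ∧ ∀ j ∈ E i, ∀ k ∈ nbrs J i \ E i, |J i k| ≤ |J i j| := by
  have key : ∀ i, ∃ t : Finset (Fin N), D ≤ degreeJ J i →
      t ⊆ nbrs J i ∧ #t = D ∧ ∀ j ∈ t, ∀ k ∈ nbrs J i \ t, |J i k| ≤ |J i j| := fun i => by
    by_cases hi : D ≤ degreeJ J i
    · obtain ⟨t, hts, htD, htop⟩ := (nbrs J i).exists_subset_card_eq_forall_sdiff_le
        (fun j => |J i j|) (hi.trans_eq (card_nbrs i).symm)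
      exact ⟨t, fun _ => ⟨hts, htD, htop⟩⟩
    · exact ⟨∅, fun h => absurd h hi⟩
  choose E hE using key
  exact ⟨E, hE⟩

variable (J) (E : Fin N → Finset (Fin N)) (ε : ℝ) (d : ℕ)

/-- Summed over `j ∈ A.erase i`, the three terms give the three counts of `IsKept J E ε d A i`
divided by their thresholds, so the sum is at least `1` when `i` is not kept. -/
noncomputable def alterationPenalty (i j : Fin N) : ℝ :=
  (if j ∈ nbrs J i then (99 * ε * d)⁻¹ else 0) + (if j ∈ E i then 1 else 0) +
    #(E j ∩ nbrs J i) / (98 * d)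

def IsKept (A : Finset (Fin N)) (i : Fin N) : Prop :=
  (#(A ∩ nbrs J i) : ℝ) ≤ 99 * ε * d ∧ Disjoint (E i) A ∧
    ∑ k ∈ A.erase i, #(E k ∩ nbrs J i) ≤ 98 * d

variable {J E ε d}

theorem alterationPenalty_nonneg (hε : 0 ≤ ε) (i j : Fin N) :
    0 ≤ alterationPenalty J E ε d i j := by
  unfold alterationPenalty
  positivity

theorem sum_erase_alterationPenalty {i : Fin N} (hE : E i ⊆ nbrs J i) (A : Finset (Fin N)) :
    ∑ j ∈ A.erase i, alterationPenalty J E ε d i j =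
      #(A ∩ nbrs J i) * (99 * ε * d)⁻¹ + #(E i ∩ A) +
        (∑ k ∈ A.erase i, #(E k ∩ nbrs J i) : ℕ) / (98 * d) := by
  have hi : i ∉ nbrs J i := by simp [mem_nbrs]
  have hA : ∀ t ⊆ nbrs J i, A.erase i ∩ t = A ∩ t := fun t ht => by
    rw [erase_inter, erase_eq_of_notMem fun h => hi (ht (mem_inter.1 h).2)]
  simp only [alterationPenalty, sum_add_distrib, sum_ite_mem, sum_const, nsmul_eq_mul, mul_one,
    sum_div, Nat.cast_sum, hA _ subset_rfl, hA _ hE, inter_comm A (E i)]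

theorem one_le_sum_erase_alterationPenalty (hε : 0 < ε) (hd : 0 < d) {i : Fin N}
    (hE : E i ⊆ nbrs J i) {A : Finset (Fin N)} (h : ¬IsKept J E ε d A i) :
    1 ≤ ∑ j ∈ A.erase i, alterationPenalty J E ε d i j := by
  rw [sum_erase_alterationPenalty hE]
  have hd' : (0 : ℝ) < d := Nat.cast_pos.2 hd
  have ha : (0 : ℝ) ≤ #(A ∩ nbrs J i) * (99 * ε * d)⁻¹ := by positivity
  have hc : (0 : ℝ) ≤ (∑ k ∈ A.erase i, #(E k ∩ nbrs J i) : ℕ) / (98 * d) := by positivity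
  simp only [IsKept, not_and_or, not_le, not_disjoint_iff_nonempty_inter] at h
  rcases h with h | h | h
  · have : 1 ≤ #(A ∩ nbrs J i) * (99 * ε * d)⁻¹ := by
      rw [← div_eq_mul_inv, one_le_div (by positivity)]
      exact h.le
    linarith
  · have : (1 : ℝ) ≤ #(E i ∩ A) := by exact_mod_cast card_pos.2 h
    linarith
  · have : 1 ≤ (∑ k ∈ A.erase i, #(E k ∩ nbrs J i) : ℕ) / (98 * (d : ℝ)) := by
      rw [one_le_div (by positivity)]
      exact_mod_cast h.le
    linarith

theorem sum_sum_erase_alterationPenalty_le (hsym : ∀ i j, J i j = J j i)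
    (hdeg : ∀ i, degreeJ J i ≤ d) (hd : 0 < d) (hε : 0 < ε) {D : ℕ}
    (hDε : (D : ℝ) ≤ (99 * ε)⁻¹) {s : Finset (Fin N)} (hE : ∀ i ∈ s, #(E i) = D) :
    ∑ i ∈ s, ∑ j ∈ s.erase i, alterationPenalty J E ε d i j ≤ 3 * (99 * ε)⁻¹ * #s := by
  have hd' : (0 : ℝ) < d := Nat.cast_pos.2 hd
  have hnbrs : ∀ i ∈ s, ∑ j ∈ s.erase i, (if j ∈ nbrs J i then (99 * ε * d)⁻¹ else 0) ≤
      (99 * ε)⁻¹ := fun i _ => by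
    rw [sum_ite_mem, sum_const, nsmul_eq_mul]
    calc #(s.erase i ∩ nbrs J i) * (99 * ε * d)⁻¹ ≤ d * (99 * ε * d)⁻¹ := by
          gcongr
          exact_mod_cast (card_le_card inter_subset_right).trans ((card_nbrs i).trans_le (hdeg i))
      _ = (99 * ε)⁻¹ := by field_simp
  have hstrong : ∀ i ∈ s, ∑ j ∈ s.erase i, (if j ∈ E i then (1 : ℝ) else 0) ≤ (99 * ε)⁻¹ :=
    fun i hi => by
      rw [sum_ite_mem, sum_const, nsmul_one]
      exact (Nat.cast_le.2 (card_le_card inter_subset_right)).trans (hE i hi ▸ hDε)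
  have hcount : ∑ i ∈ s, ∑ j ∈ s.erase i, #(E j ∩ nbrs J i) ≤ #s * (D * d) :=
    calc _ ≤ ∑ i, ∑ j ∈ s, #(E j ∩ nbrs J i) :=
          (sum_le_sum fun i _ => sum_le_sum_of_subset (erase_subset i s)).trans
            (sum_le_sum_of_subset (subset_univ s))
      _ = ∑ j ∈ s, ∑ i, #(E j ∩ nbrs J i) := sum_comm
      _ ≤ ∑ j ∈ s, D * d := sum_le_sum fun j hj => hE j hj ▸ sum_card_inter_nbrs_le hsym hdeg _
      _ = #s * (D * d) := by rw [sum_const, smul_eq_mul]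
  have hoverlap : ∑ i ∈ s, ∑ j ∈ s.erase i, (#(E j ∩ nbrs J i) : ℝ) / (98 * d) ≤
      (99 * ε)⁻¹ * #s :=
    calc _ = ((∑ i ∈ s, ∑ j ∈ s.erase i, #(E j ∩ nbrs J i) : ℕ) : ℝ) / (98 * d) := by
          simp only [Nat.cast_sum, sum_div]
      _ ≤ ((#s * (D * d) : ℕ) : ℝ) / (98 * d) := by gcongr
      _ = D / 98 * #s := by push_cast; field_simp
      _ ≤ (99 * ε)⁻¹ * #s := by gcongr; linarith [(D.cast_nonneg : (0 : ℝ) ≤ D)]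
  calc _ = ∑ i ∈ s, (∑ j ∈ s.erase i, (if j ∈ nbrs J i then (99 * ε * d)⁻¹ else 0) +
          ∑ j ∈ s.erase i, (if j ∈ E i then (1 : ℝ) else 0)) +
        ∑ i ∈ s, ∑ j ∈ s.erase i, (#(E j ∩ nbrs J i) : ℝ) / (98 * d) := by
        simp only [alterationPenalty, sum_add_distrib]
    _ ≤ ∑ i ∈ s, ((99 * ε)⁻¹ + (99 * ε)⁻¹) + (99 * ε)⁻¹ * #s :=
        add_le_add (sum_le_sum fun i hi => add_le_add (hnbrs i hi) (hstrong i hi)) hoverlap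
    _ = 3 * (99 * ε)⁻¹ * #s := by rw [sum_const, nsmul_eq_mul]; ring

variable {A T : Finset (Fin N)} {i : Fin N}

theorem IsKept.strongEdge (hdiag : ∀ i, J i i = 0) (hEi : E i ⊆ nbrs J i)
    (htop : ∀ j ∈ E i, ∀ k ∈ nbrs J i \ E i, |J i k| ≤ |J i j|) (hTA : T ⊆ A)
    (hi : IsKept J E ε d A i) :
    ∀ j ∈ E i, j ∉ T ∧ J i j ≠ 0 ∧ ∀ k ∈ T, |J i k| ≤ |J i j| := by
  intro j hj
  have hEA : ∀ k ∈ T, k ∉ E i := fun k hk hkE => disjoint_left.1 hi.2.1 hkE (hTA hk)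
  refine ⟨fun hjT => hEA j hjT hj, (mem_nbrs.1 (hEi hj)).2, fun k hk => ?_⟩
  by_cases hJk : J i k = 0
  · simp [hJk]
  · have hki : k ≠ i := fun h => hJk (h ▸ hdiag i)
    exact htop j hj k (mem_sdiff.2 ⟨mem_nbrs.2 ⟨hki, hJk⟩, hEA k hk⟩)

theorem IsKept.sum_card_filter_le (hEi : #(E i) ≤ d) (hTA : T ⊆ A) (hiT : i ∈ T)
    (hi : IsKept J E ε d A i) :
    ∑ j ∈ univ.filter (fun j => j ∉ T ∧ j ≠ i ∧ J i j ≠ 0), #(T.filter (fun k => j ∈ E k)) ≤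
      99 * d :=
  calc _ ≤ ∑ j ∈ nbrs J i, #(T.filter (fun k => j ∈ E k)) :=
        sum_le_sum_of_subset fun j hj => by simp_all [mem_nbrs]
    _ = ∑ k ∈ T, #((nbrs J i).filter (fun j => j ∈ E k)) :=
        sum_card_bipartiteAbove_eq_sum_card_bipartiteBelow (fun j k => j ∈ E k)
    _ ≤ ∑ k ∈ T, #(E k ∩ nbrs J i) :=
        sum_le_sum fun k _ => card_le_card fun j hj => by simp_all
    _ = #(E i ∩ nbrs J i) + ∑ k ∈ T.erase i, #(E k ∩ nbrs J i) := (add_sum_erase T _ hiT).symm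
    _ ≤ d + 98 * d := add_le_add ((card_le_card inter_subset_left).trans hEi)
        ((sum_le_sum_of_subset (erase_subset_erase i hTA)).trans hi.2.2)
    _ = 99 * d := by ring

theorem exists_large_kept_set {N d : ℕ} {J : Fin N → Fin N → ℝ} (hsym : ∀ i j, J i j = J j i)
    (hdiag : ∀ i, J i i = 0) (hdeg : ∀ i, degreeJ J i ≤ d) (hd : 0 < d) {ε : ℝ} (hε : 0 < ε)
    (hε₁ : ε < 1) {D : ℕ} (hDε : (D : ℝ) ≤ (99 * ε)⁻¹) (s : Finset (Fin N))
    (hs : ∀ i ∈ s, D ≤ degreeJ J i) :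
    ∃ T ⊆ s, 96 / 99 * ε * #s ≤ #T ∧
      (∀ i ∈ T, (#(T.filter (fun j => j ≠ i ∧ J i j ≠ 0)) : ℝ) ≤ 99 * ε * d) ∧
      ∃ E : Fin N → Finset (Fin N),
        (∀ i ∈ T, #(E i) = D ∧ ∀ j ∈ E i, j ∉ T ∧ J i j ≠ 0 ∧ ∀ k ∈ T, |J i k| ≤ |J i j|) ∧
        ∀ i ∈ T, ∑ j ∈ univ.filter (fun j => j ∉ T ∧ j ≠ i ∧ J i j ≠ 0),
          #(T.filter (fun k => j ∈ E k)) ≤ 99 * d := by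
  obtain ⟨E, hE⟩ := exists_strongEdges (J := J) D
  have hEs := fun i hi => hE i (hs i hi)
  obtain ⟨A, hAs, hA⟩ := exists_subset_le_sum_one_sub_sum s (alterationPenalty J E ε d) hε hε₁
  set T := A.filter (IsKept J E ε d A)
  have hTA : T ⊆ A := filter_subset _ _
  have hkept : ∀ i ∈ T, i ∈ s ∧ IsKept J E ε d A i :=
    fun i hi => ⟨hAs (mem_filter.1 hi).1, (mem_filter.1 hi).2⟩
  have hsize : 96 / 99 * ε * #s ≤ #T :=
    calc 96 / 99 * ε * #s = ε * #s - ε ^ 2 * (3 * (99 * ε)⁻¹ * #s) := by field_simp; ring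
      _ ≤ ε * #s - ε ^ 2 * ∑ i ∈ s, ∑ j ∈ s.erase i, alterationPenalty J E ε d i j := by
          gcongr
          exact sum_sum_erase_alterationPenalty_le hsym hdeg hd hε hDε fun i hi => (hEs i hi).2.1
      _ ≤ ∑ i ∈ A, (1 - ∑ j ∈ A.erase i, alterationPenalty J E ε d i j) := hA
      _ ≤ #T := A.sum_one_sub_le_card_filter _ _
          (fun i _ => sum_nonneg fun j _ => alterationPenalty_nonneg hε.le i j)
          fun i hi => one_le_sum_erase_alterationPenalty hε hd (hEs i (hAs hi)).1
  refine ⟨T, hTA.trans hAs, hsize, fun i hi => ?_, E, fun i hi => ?_, fun i hi => ?_⟩ <;>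
    obtain ⟨his, hik⟩ := hkept i hi <;> obtain ⟨hEi, hcard, htop⟩ := hEs i his
  · calc (#(T.filter (fun j => j ≠ i ∧ J i j ≠ 0)) : ℝ) ≤ #(A ∩ nbrs J i) := by
          refine Nat.cast_le.2 (card_le_card fun j hj => ?_)
          obtain ⟨hjT, hji, hJ⟩ := mem_filter.1 hj
          exact mem_inter.2 ⟨hTA hjT, mem_nbrs.2 ⟨hji, hJ⟩⟩
      _ ≤ 99 * ε * d := hik.1
  · exact ⟨hcard, hik.strongEdge hdiag hEi htop hTA⟩
  · exact hik.sum_card_filter_le (hcard.trans_le ((hs i his).trans (hdeg i))) hTA hi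

end Ising

/-- there are `ε₀, c > 0` such that for every `0 < ε ≤ ε₀` there is `n₀` so
that the following holds. Given an Ising instance of maximum degree at most `d` with
`∑_j |J i j| ≤ J_max` for all `i`, disjoint sets `T₁, T₂` with complement `V₀` satisfying
`|V₀| ≥ n₀`, and such that at least `(98/99)·|V₀|` of the variables of `V₀` have degree at
least `D = ⌊(1/99)·ε⁻¹⌋`, there is `T ⊆ V₀` with `|T| ≥ c·ε·|V₀|` such that:
(1) every `i ∈ T` has at most `99·ε·d` neighbors inside `T`;
(2) every `i ∈ T` has at least `D` variables `j ∉ T` with `J i j ≠ 0` and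
`|J i j| ≥ max_{k ∈ T} |J i k|`;
(3) each `i ∈ T` can be assigned a set `E i` of exactly `D` such variables ("strong edges")
so that for every `i ∈ T` the sum, over neighbors `j ∉ T` of `i`, of the number of `k ∈ T`
with `j ∈ E k` is at most `99·d`;
(4) every `i ∈ T` satisfies `∑_{j ∈ T₁ ∪ T₂} |J i j| ≤ 99·J_max·(|T₁|+|T₂|)/|V₀|`. -/
theorem stmt19 :
    ∃ ε₀ c : ℝ, 0 < ε₀ ∧ 0 < c ∧
      ∀ ε : ℝ, 0 < ε → ε ≤ ε₀ →
        ∃ n₀ : ℕ,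
          ∀ (N d : ℕ) (Jmax : ℝ) (h : Fin N → ℝ) (J : Fin N → Fin N → ℝ),
            (∀ i j, J i j = J j i) → (∀ i, J i i = 0) →
            (∀ i, degreeJ J i ≤ d) →
            (∀ i, ∑ j, |J i j| ≤ Jmax) →
            ∀ T₁ T₂ : Finset (Fin N), Disjoint T₁ T₂ →
              n₀ ≤ ((T₁ ∪ T₂)ᶜ : Finset (Fin N)).card →
              ((98 : ℝ) / 99) * ((T₁ ∪ T₂)ᶜ : Finset (Fin N)).card ≤
                ((((T₁ ∪ T₂)ᶜ : Finset (Fin N)).filter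
                  (fun i => ⌊ε⁻¹ / 99⌋₊ ≤ degreeJ J i)).card : ℝ) →
              ∃ T : Finset (Fin N), T ⊆ (T₁ ∪ T₂)ᶜ ∧
                c * ε * ((T₁ ∪ T₂)ᶜ : Finset (Fin N)).card ≤ T.card ∧
                (∀ i ∈ T,
                  ((T.filter (fun j => j ≠ i ∧ J i j ≠ 0)).card : ℝ) ≤ 99 * ε * d) ∧
                (∀ i ∈ T,
                  ⌊ε⁻¹ / 99⌋₊ ≤ (univ.filter (fun j => j ∉ T ∧ J i j ≠ 0 ∧
                    ∀ k ∈ T, |J i k| ≤ |J i j|)).card) ∧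
                (∃ E : Fin N → Finset (Fin N),
                  (∀ i ∈ T, (E i).card = ⌊ε⁻¹ / 99⌋₊ ∧
                    ∀ j ∈ E i, j ∉ T ∧ J i j ≠ 0 ∧ ∀ k ∈ T, |J i k| ≤ |J i j|) ∧
                  ∀ i ∈ T,
                    ((∑ j ∈ univ.filter (fun j => j ∉ T ∧ j ≠ i ∧ J i j ≠ 0),
                        (T.filter (fun k => j ∈ E k)).card : ℕ) : ℝ) ≤ 99 * d) ∧
                ∀ i ∈ T, ∑ j ∈ T₁ ∪ T₂, |J i j| ≤
                  99 * Jmax * ((T₁.card : ℝ) + T₂.card) /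
                    ((T₁ ∪ T₂)ᶜ : Finset (Fin N)).card := by
  refine ⟨1 / 99, 1 / 2, by norm_num, by norm_num, fun ε hε hε₀ => ⟨1, ?_⟩⟩
  intro N d Jmax _ J hsym hdiag hdeg hJmax T₁ T₂ hdisj hn hHD
  set V₀ := (T₁ ∪ T₂)ᶜ
  set D := ⌊ε⁻¹ / 99⌋₊
  set HD := V₀.filter fun i => D ≤ degreeJ J i
  set s := HD.filter fun i => ∑ j ∈ T₁ ∪ T₂, |J i j| ≤ 99 * Jmax * ((#T₁ : ℝ) + #T₂) / #V₀
  have hεD : ε⁻¹ / 99 = (99 * ε)⁻¹ := by rw [mul_inv]; ring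
  have hD : 1 ≤ D := Nat.le_floor <| by
    rw [Nat.cast_one, hεD, one_le_inv₀ (by positivity)]
    linarith
  have hDε : (D : ℝ) ≤ (99 * ε)⁻¹ := hεD ▸ Nat.floor_le (by positivity)
  have hV₀ : (1 : ℝ) ≤ #V₀ := by exact_mod_cast hn
  have hd : 0 < d := by
    obtain ⟨i, hi⟩ : HD.Nonempty := card_pos.1 (by exact_mod_cast (by linarith : (0 : ℝ) < #HD))
    exact hD.trans ((mem_filter.1 hi).2.trans (hdeg i))
  have hs : (#HD : ℝ) - #V₀ / 99 ≤ #s :=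
    Ising.card_sub_le_card_filter_sum_abs_le hsym hJmax hdisj HD (by linarith)
  obtain ⟨T, hTs, hT, hsparse, E, hE, hcong⟩ := Ising.exists_large_kept_set hsym hdiag hdeg hd hε
    (by linarith) hDε s fun i hi => (mem_filter.1 (mem_filter.1 hi).1).2
  refine ⟨T, hTs.trans ((filter_subset _ _).trans (filter_subset _ _)), ?_, hsparse,
    fun i hi => ?_, ⟨E, hE, fun i hi => by exact_mod_cast hcong i hi⟩,
    fun i hi => (mem_filter.1 (hTs hi)).2⟩
  · nlinarith
  · exact (hE i hi).1 ▸ card_le_card fun j hj => mem_filter.2 ⟨mem_univ j, (hE i hi).2 j hj⟩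
end
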